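/- arXiv:2603.04665 — 8 statements merged into one kernel-verified Lean document; each statement's English description precedes it below -/
import Mathlib

section
/- For every positive integer k there exists an integer x_k with 0 ≤ x_k ≤ 2^k - 1 such that for every i with 0 ≤ i ≤ k-1, the coefficient of 2^i in the binary representation of x_k - i is 0; equivalently, (x_k - i) mod 2^(i+1) lies in {0, 1, ..., 2^i - 1}. -/
/-!
Build `x` by induction on `k`, keeping `x < 2 ^ k`. If already `k ≤ x`, then `x - k < 2 ^ k`,
so bit `k` of `x - k` is `0` and `x` still works. Otherwise adding `2 ^ k` leaves the residues
modulo `2 ^ (i + 1)` for `i < k` unchanged and turns `x - k` into `2 ^ k - (k - x) < 2 ^ k`.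
-/

def ShiftedBitsVanish (k x : ℕ) : Prop :=
  ∀ i < k, i ≤ x ∧ (x - i) % 2 ^ (i + 1) < 2 ^ i

lemma mod_two_pow_succ_lt_of_lt {y i : ℕ} (h : y < 2 ^ i) : y % 2 ^ (i + 1) < 2 ^ i := by
  rwa [Nat.mod_eq_of_lt (h.trans (Nat.pow_lt_pow_succ one_lt_two))]

lemma add_two_pow_mod_two_pow_succ (y : ℕ) {i n : ℕ} (h : i < n) :
    (y + 2 ^ n) % 2 ^ (i + 1) = y % 2 ^ (i + 1) := by
  obtain ⟨c, hc⟩ := pow_dvd_pow 2 h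
  rw [hc, Nat.add_mul_mod_self_left]

namespace ShiftedBitsVanish

variable {k x : ℕ}

lemma succ_of_le (hkx : k ≤ x) (hx : x < 2 ^ k) (h : ShiftedBitsVanish k x) :
    ShiftedBitsVanish (k + 1) x := by
  intro i hi
  rcases Nat.lt_succ_iff_lt_or_eq.mp hi with hik | rfl
  · exact h i hik
  · exact ⟨hkx, mod_two_pow_succ_lt_of_lt (by omega)⟩

lemma succ_add_two_pow (hxk : x < k) (h : ShiftedBitsVanish k x) :
    ShiftedBitsVanish (k + 1) (x + 2 ^ k) := by
  have hk : k < 2 ^ k := Nat.lt_two_pow_self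
  intro i hi
  rcases Nat.lt_succ_iff_lt_or_eq.mp hi with hik | rfl
  · obtain ⟨hix, hmod⟩ := h i hik
    refine ⟨by omega, ?_⟩
    rwa [show x + 2 ^ k - i = x - i + 2 ^ k by omega, add_two_pow_mod_two_pow_succ _ hik]
  · exact ⟨by omega, mod_two_pow_succ_lt_of_lt (by omega)⟩

end ShiftedBitsVanish

theorem exists_lt_two_pow_shiftedBitsVanish (k : ℕ) : ∃ x < 2 ^ k, ShiftedBitsVanish k x := by
  induction k with
  | zero => exact ⟨0, by norm_num, fun i hi => absurd hi (Nat.not_lt_zero i)⟩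
  | succ k ih =>
    obtain ⟨x, hx, h⟩ := ih
    rcases le_or_gt k x with hkx | hxk
    · exact ⟨x, hx.trans (Nat.pow_lt_pow_succ one_lt_two), h.succ_of_le hkx hx⟩
    · exact ⟨x + 2 ^ k, by rw [pow_succ]; omega, h.succ_add_two_pow hxk⟩

theorem stmt0 : ∀ k : ℕ, 0 < k →
    ∃ x : ℕ, x ≤ 2 ^ k - 1 ∧ ∀ i < k, i ≤ x ∧ (x - i) % 2 ^ (i + 1) < 2 ^ i := by
  intro k _
  obtain ⟨x, hx, h⟩ := exists_lt_two_pow_shiftedBitsVanish k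
  exact ⟨x, by omega, h⟩
end

section
/- Let G be a graph on n vertices placed in convex position in the plane, and let k be a natural number. If G has more than k·n edges, then the convex-geometric (straight-line) drawing of G contains a plane (pairwise noncrossing) path with at least 2k+1 edges. -/
/-!
Call a walk a *spiral* if each new vertex lies strictly inside the arc cut off by the previous
edge, on alternating sides. The arcs nest, so a spiral is a plane path. If an edge `ab` starts a
spiral of length `k` on each side of the chord `ab`, the two spirals live in the complementary
arcs `[a, b]` and `[b, a]`, and together with `ab` they form a plane path with `2k + 1` edges.

Such an edge exists once `G` has more than `k·n` edges, by induction on `k`. Fix the direction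
`χ` of the last step of a spiral of length `k`, and delete, for every vertex `x`, the edge from
`x` to its nearest neighbour in direction `χ`: at most `n` edges. In the remaining graph every
spiral ends in an edge `xy` that is not the nearest one from `x`, so a nearer neighbour of `x`
lies strictly between `x` and `y`, and the spiral extends by one step in `G`.
-/

/-- `x` lies strictly inside the open cyclic interval from `a` (clockwise) to `b`,
for points labelled by `ZMod n` in cyclic order. -/
def inArc (n : ℕ) (a b x : ZMod n) : Prop :=
  0 < (x - a).val ∧ (x - a).val < (b - a).val

/-- Two chords on points in convex position (labelled cyclically by `ZMod n`) cross:
all four endpoints are distinct and the endpoints interleave in the cyclic order,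
i.e. exactly one endpoint of `f` lies in the open cyclic interval spanned by `e`. -/
def Crossing (n : ℕ) (e f : ZMod n × ZMod n) : Prop :=
  e.1 ≠ e.2 ∧ f.1 ≠ f.2 ∧ e.1 ≠ f.1 ∧ e.1 ≠ f.2 ∧ e.2 ≠ f.1 ∧ e.2 ≠ f.2 ∧
    (inArc n e.1 e.2 f.1 ↔ ¬ inArc n e.1 e.2 f.2)

open SimpleGraph

section Arcs

variable {n : ℕ}

/-- Steps from `x` to `y` around the cycle, in the direction of increasing labels if `d`. -/
def arcDist (d : Bool) (x y : ZMod n) : ℕ :=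
  if d then (y - x).val else (x - y).val

def closedArc (d : Bool) (x y : ZMod n) : Set (ZMod n) :=
  {v | arcDist d x v ≤ arcDist d x y}

@[simp]
lemma arcDist_self (d : Bool) (x : ZMod n) : arcDist d x x = 0 := by
  cases d <;> simp [arcDist]

lemma arcDist_not (d : Bool) (x y : ZMod n) : arcDist (!d) y x = arcDist d x y := by
  cases d <;> rfl

lemma inArc_iff_arcDist {a b x : ZMod n} :
    inArc n a b x ↔ 0 < arcDist true a x ∧ arcDist true a x < arcDist true a b :=
  Iff.rfl

lemma left_mem_closedArc (d : Bool) (x y : ZMod n) : x ∈ closedArc d x y := by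
  simp [closedArc]

lemma right_mem_closedArc (d : Bool) (x y : ZMod n) : y ∈ closedArc d x y :=
  le_refl (arcDist d x y)

lemma arcDist_eq_zero_iff {d : Bool} {x y : ZMod n} : arcDist d x y = 0 ↔ x = y := by
  cases d
  · rw [arcDist, if_neg Bool.false_ne_true, ZMod.val_eq_zero, sub_eq_zero]
  · rw [arcDist, if_pos rfl, ZMod.val_eq_zero, sub_eq_zero, eq_comm]

lemma arcDist_pos {d : Bool} {x y : ZMod n} (h : x ≠ y) : 0 < arcDist d x y :=
  Nat.pos_of_ne_zero (mt arcDist_eq_zero_iff.mp h)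

variable [NeZero n]

lemma arcDist_lt (d : Bool) (x y : ZMod n) : arcDist d x y < n := by
  cases d <;> exact ZMod.val_lt _

lemma arcDist_injective (d : Bool) (x : ZMod n) : Function.Injective (arcDist d x) := by
  intro y z h
  cases d
  · exact sub_right_injective (ZMod.val_injective n h)
  · exact sub_left_injective (ZMod.val_injective n h)

lemma arcDist_add_arcDist (d : Bool) (x y z : ZMod n) :
    arcDist d x y + arcDist d y z = arcDist d x z ∨
      arcDist d x y + arcDist d y z = arcDist d x z + n := by
  have key : ∀ a b c : ZMod n, (b - a).val + (c - b).val = (c - a).val ∨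
      (b - a).val + (c - b).val = (c - a).val + n := by
    intro a b c
    have hsum := ZMod.val_add (b - a) (c - b)
    rw [sub_add_sub_cancel'] at hsum
    have := ZMod.val_lt (b - a)
    have := ZMod.val_lt (c - b)
    rcases lt_or_ge ((b - a).val + (c - b).val) n with h | h
    · rw [Nat.mod_eq_of_lt h] at hsum
      omega
    · rw [Nat.mod_eq_sub_mod h, Nat.mod_eq_of_lt (by omega)] at hsum
      omega
  cases d
  · have := key z y x
    simp only [arcDist, Bool.false_eq_true, if_false]
    omega
  · exact key x y z

lemma closedArc_not (d : Bool) (x y : ZMod n) : closedArc (!d) x y = closedArc d y x := by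
  ext v
  simp only [closedArc, Set.mem_ofPred_eq, arcDist_not]
  have := arcDist_add_arcDist d y v x
  have := arcDist_lt d y v
  have := arcDist_lt d v x
  omega

lemma le_arcDist_of_arcDist_lt {d : Bool} {x y v : ZMod n} (h : arcDist d x v < arcDist d x y) :
    arcDist d y x ≤ arcDist d y v := by
  have := arcDist_add_arcDist d x y v
  have := arcDist_add_arcDist d x y x
  have := arcDist_lt d x v
  simp only [arcDist_self] at *
  omega

end Arcs

section Crossings

variable {n : ℕ} [NeZero n]

lemma inArc_swap {a b x : ZMod n} (hab : a ≠ b) (hxa : x ≠ a) (hxb : x ≠ b) :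
    inArc n b a x ↔ ¬ inArc n a b x := by
  simp only [inArc_iff_arcDist]
  have := arcDist_pos (d := true) hab
  have := arcDist_pos (d := true) hxa.symm
  have := arcDist_pos (d := true) hxb.symm
  have := arcDist_add_arcDist true a b x
  have := arcDist_add_arcDist true a b a
  have := arcDist_lt true a x
  have := arcDist_lt true b x
  have := arcDist_lt true a b
  simp only [arcDist_self] at *
  omega

lemma Crossing.swap_left {e f : ZMod n × ZMod n} (h : Crossing n e f) : Crossing n e.swap f := by
  obtain ⟨h₁, h₂, h₃, h₄, h₅, h₆, hiff⟩ := h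
  refine ⟨h₁.symm, h₂, h₅, h₆, h₃, h₄, ?_⟩
  simp only [Prod.fst_swap, Prod.snd_swap]
  rw [inArc_swap h₁ h₃.symm h₅.symm, inArc_swap h₁ h₄.symm h₆.symm]
  tauto

lemma Crossing.symm {e f : ZMod n × ZMod n} (h : Crossing n e f) : Crossing n f e := by
  obtain ⟨c, d⟩ := e
  obtain ⟨g, k⟩ := f
  obtain ⟨h₁, h₂, h₃, h₄, h₅, h₆, hiff⟩ := h
  refine ⟨h₂, h₁, h₃.symm, h₅.symm, h₄.symm, h₆.symm, ?_⟩
  simp only [inArc_iff_arcDist] at hiff ⊢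
  have := arcDist_pos (d := true) h₁
  have := arcDist_pos (d := true) h₂
  have := arcDist_pos (d := true) h₃
  have := arcDist_pos (d := true) h₄
  have := arcDist_pos (d := true) h₃.symm
  have := arcDist_pos (d := true) h₅.symm
  have := (arcDist_injective true c).ne h₆
  have := arcDist_add_arcDist true c g c
  have := arcDist_add_arcDist true c g k
  have := arcDist_add_arcDist true c g d
  have := arcDist_lt true g c
  have := arcDist_lt true g k
  have := arcDist_lt true g d
  have := arcDist_lt true c g
  have := arcDist_lt true c k
  have := arcDist_lt true c d
  simp only [arcDist_self] at *
  omega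

lemma crossing_swap_swap_iff {e f : ZMod n × ZMod n} :
    Crossing n f.swap e.swap ↔ Crossing n e f := by
  refine ⟨fun h => ?_, fun h => h.symm.swap_left.symm.swap_left.symm⟩
  simpa using h.swap_left.symm.swap_left

lemma not_crossing_of_mem_closedArc {d : Bool} {x y : ZMod n} {e f : ZMod n × ZMod n}
    (he₁ : e.1 ∈ closedArc d x y) (he₂ : e.2 ∈ closedArc d x y)
    (hf₁ : f.1 ∈ closedArc d y x) (hf₂ : f.2 ∈ closedArc d y x) : ¬ Crossing n e f := by
  suffices key : ∀ {x y : ZMod n}, e.1 ∈ closedArc true x y → e.2 ∈ closedArc true x y →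
      f.1 ∈ closedArc true y x → f.2 ∈ closedArc true y x → ¬ Crossing n e f by
    cases d
    · rw [← Bool.not_true, closedArc_not] at he₁ he₂ hf₁ hf₂
      exact key he₁ he₂ hf₁ hf₂
    · exact key he₁ he₂ hf₁ hf₂
  intro x y he₁ he₂ hf₁ hf₂
  obtain ⟨c, c'⟩ := e
  obtain ⟨g, g'⟩ := f
  rintro ⟨h₁, -, h₃, h₄, h₅, h₆, hiff⟩
  simp only [closedArc, Set.mem_ofPred_eq] at he₁ he₂ hf₁ hf₂
  simp only [inArc_iff_arcDist] at hiff
  -- Measured from `x`, the chord `e` lies in `[0, |xy|]` and `f` in `{0} ∪ [|xy|, n)`, so both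
  -- endpoints of `f` lie on the same side of `e`.
  have := arcDist_pos (d := true) h₁
  have := arcDist_pos (d := true) h₃
  have := arcDist_pos (d := true) h₄
  have := (arcDist_injective true x).ne h₅
  have := (arcDist_injective true x).ne h₆
  have := arcDist_add_arcDist true x c g
  have := arcDist_add_arcDist true x c g'
  have := arcDist_add_arcDist true x c c'
  have := arcDist_add_arcDist true x y g
  have := arcDist_add_arcDist true x y g'
  have := arcDist_add_arcDist true x y x
  have := arcDist_lt true c g
  have := arcDist_lt true c g'
  have := arcDist_lt true c c'
  have := arcDist_lt true x g
  have := arcDist_lt true x g'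
  have := arcDist_lt true y g
  have := arcDist_lt true y g'
  have := arcDist_lt true x y
  have := arcDist_lt true y x
  simp only [arcDist_self] at *
  omega

end Crossings

theorem SimpleGraph.Walk.zip_support_tail {V : Type*} {G : SimpleGraph V} {u v : V}
    (p : G.Walk u v) : p.support.zip p.support.tail = p.darts.map (·.toProd) := by
  induction p with
  | nil => rfl
  | cons h p ih =>
    rw [support_cons, List.tail_cons, ← cons_tail_support p, List.zip_cons_cons,
      cons_tail_support, ih, darts_cons, List.map_cons]

section Plane

variable {n : ℕ} {G : SimpleGraph (ZMod n)}

def IsPlane {u v : ZMod n} (p : G.Walk u v) : Prop :=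
  p.darts.Pairwise fun e f => ¬ Crossing n e.toProd f.toProd

variable [NeZero n]

theorem IsPlane.reverse {u v : ZMod n} {p : G.Walk u v} (hp : IsPlane p) :
    IsPlane p.reverse := by
  rw [IsPlane, Walk.darts_reverse, List.pairwise_reverse, List.pairwise_map]
  refine hp.imp fun hef hcross => hef ?_
  rwa [Dart.symm_toProd, Dart.symm_toProd, crossing_swap_swap_iff] at hcross

theorem IsPlane.append {d : Bool} {a b u v w : ZMod n} {p : G.Walk u v} {q : G.Walk v w}
    (hp : IsPlane p) (hq : IsPlane q) (hpC : ∀ x ∈ p.support, x ∈ closedArc d a b)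
    (hqC : ∀ x ∈ q.support, x ∈ closedArc d b a) : IsPlane (p.append q) := by
  rw [IsPlane, Walk.darts_append, List.pairwise_append]
  exact ⟨hp, hq, fun e he f hf => not_crossing_of_mem_closedArc
    (hpC _ (p.dart_fst_mem_support_of_mem_darts he))
    (hpC _ (p.dart_snd_mem_support_of_mem_darts he))
    (hqC _ (q.dart_fst_mem_support_of_mem_darts hf))
    (hqC _ (q.dart_snd_mem_support_of_mem_darts hf))⟩

theorem IsPlane.cons {d : Bool} {u v w : ZMod n} {p : G.Walk v w} (hp : IsPlane p)
    (h : G.Adj u v) (hpC : ∀ x ∈ p.support, x ∈ closedArc d v u) :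
    IsPlane (Walk.cons h p) := by
  refine IsPlane.append (p := .cons h .nil) (List.pairwise_singleton _ _) hp ?_ hpC
  intro x hx
  simp only [Walk.support_cons, Walk.support_nil, List.mem_cons, List.not_mem_nil, or_false] at hx
  rcases hx with rfl | rfl
  · exact left_mem_closedArc d x v
  · exact right_mem_closedArc d u x

end Plane

section Spirals

variable {n : ℕ}

/-- `Spiral G d x y t`: a walk `x = v₀, v₁, …, v_t` in `G` in which each `v_{i+1}` lies strictly
between `v_i` and `v_{i-1}` (with `v_{-1} = y`), going from `v_i` in direction `d` for even `i`
and in direction `!d` for odd `i`. -/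
inductive Spiral (G : SimpleGraph (ZMod n)) : Bool → ZMod n → ZMod n → ℕ → Prop
  | nil (d : Bool) (x y : ZMod n) : Spiral G d x y 0
  | cons {d : Bool} {x y : ZMod n} {t : ℕ} (z : ZMod n) (hxz : G.Adj x z)
      (hz : arcDist d x z < arcDist d x y) (hs : Spiral G (!d) z x t) : Spiral G d x y (t + 1)

/-- The direction of the step `v_s → v_{s+1}` of a spiral starting in direction `d`. -/
def stepDir : Bool → ℕ → Bool
  | d, 0 => d
  | d, s + 1 => stepDir (!d) s

def nearestEdges (G : SimpleGraph (ZMod n)) (d : Bool) : Set (Sym2 (ZMod n)) :=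
  {e | ∃ x y, G.Adj x y ∧ (∀ z, G.Adj x z → arcDist d x y ≤ arcDist d x z) ∧ s(x, y) = e}

variable {G : SimpleGraph (ZMod n)}

theorem Spiral.succ_of_deleteEdges {χ d : Bool} {x y : ZMod n} {s : ℕ}
    (h : Spiral (G.deleteEdges (nearestEdges G χ)) d x y s)
    (hxy : (G.deleteEdges (nearestEdges G χ)).Adj x y) (hd : stepDir d s = χ) :
    Spiral G d x y (s + 1) := by
  induction h with
  | nil d x y =>
    obtain rfl : d = χ := hd
    rw [deleteEdges_adj] at hxy
    obtain ⟨z, hxz, hz⟩ : ∃ z, G.Adj x z ∧ arcDist d x z < arcDist d x y := by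
      by_contra! hmin
      exact hxy.2 ⟨x, y, hxy.1, hmin, rfl⟩
    exact .cons z hxz hz (.nil _ _ _)
  | cons z hxz hz _ ih => exact .cons z (deleteEdges_le _ hxz) hz (ih hxz.symm hd)

variable [NeZero n]

theorem Spiral.exists_walk {d : Bool} {x y : ZMod n} {t : ℕ} (h : Spiral G d x y t)
    (hxy : x ≠ y) :
    ∃ (w : ZMod n) (p : G.Walk x w), p.length = t ∧ p.IsPath ∧ IsPlane p ∧
      ∀ v ∈ p.support, arcDist d x v < arcDist d x y := by
  induction h with
  | nil d x y =>
    refine ⟨x, .nil, rfl, .nil, List.Pairwise.nil, fun v hv => ?_⟩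
    rw [Walk.support_nil, List.mem_singleton] at hv
    rw [hv, arcDist_self]
    exact arcDist_pos hxy
  | @cons d x y t z hxz hz hs ih =>
    obtain ⟨w, p, hlen, hpath, hplane, hsupp⟩ := ih hxz.ne.symm
    have hsupp' : ∀ v ∈ p.support, v ∈ closedArc d x z := fun v hv => by
      rw [← closedArc_not]
      exact (hsupp v hv).le
    refine ⟨w, .cons hxz p, by rw [Walk.length_cons, hlen],
      hpath.cons fun hx => (hsupp x hx).false, hplane.cons hxz fun v hv => (hsupp v hv).le, ?_⟩
    intro v hv
    rcases List.mem_cons.mp hv with rfl | hv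
    · exact (arcDist_self d v).symm ▸ (Nat.zero_le _).trans_lt hz
    · exact (hsupp' v hv).trans_lt hz

theorem ncard_nearestEdges_le (G : SimpleGraph (ZMod n)) (d : Bool) :
    (nearestEdges G d).ncard ≤ n := by
  have hnearest : ∀ x, ∃ e, ∀ y, G.Adj x y → (∀ z, G.Adj x z → arcDist d x y ≤ arcDist d x z) →
      s(x, y) = e := by
    intro x
    by_cases hx : ∃ y, G.Adj x y ∧ ∀ z, G.Adj x z → arcDist d x y ≤ arcDist d x z
    · obtain ⟨y, hxy, hy⟩ := hx
      exact ⟨s(x, y), fun y' hxy' hy' =>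
        congrArg _ (arcDist_injective d x ((hy' y hxy).antisymm (hy y' hxy')))⟩
    · push Not at hx
      exact ⟨s(x, x), fun y hxy hy => absurd hy (by simpa using hx y hxy)⟩
  choose f hf using hnearest
  calc (nearestEdges G d).ncard ≤ (Set.range f).ncard := by
        refine Set.ncard_le_ncard ?_ (Set.toFinite _)
        rintro _ ⟨x, y, hxy, hy, rfl⟩
        exact ⟨x, (hf x y hxy hy).symm⟩
    _ ≤ n := by
        rw [← Set.image_univ]
        exact (Set.ncard_image_le (Set.toFinite _)).trans (by rw [Set.ncard_univ, Nat.card_zmod])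

theorem exists_adj_spiral_spiral (t : ℕ) (G : SimpleGraph (ZMod n))
    (hG : t * n < G.edgeSet.ncard) :
    ∃ a b, G.Adj a b ∧ Spiral G true a b t ∧ Spiral G true b a t := by
  induction t generalizing G with
  | zero =>
    obtain ⟨e, he⟩ := Set.nonempty_of_ncard_ne_zero (by omega : G.edgeSet.ncard ≠ 0)
    induction e using Sym2.ind with
    | h a b => exact ⟨a, b, he, .nil _ _ _, .nil _ _ _⟩
  | succ t ih =>
    set G' := G.deleteEdges (nearestEdges G (stepDir true t))
    have hcard : G.edgeSet.ncard ≤ G'.edgeSet.ncard + n := by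
      rw [edgeSet_deleteEdges]
      exact (Set.ncard_le_ncard_sdiff_add_ncard _ _).trans
        (Nat.add_le_add_left (ncard_nearestEdges_le G _) _)
    obtain ⟨a, b, hab, ha, hb⟩ := ih G' (by rw [Nat.succ_mul] at hG; omega)
    exact ⟨a, b, (deleteEdges_le _ hab), ha.succ_of_deleteEdges hab rfl,
      hb.succ_of_deleteEdges hab.symm rfl⟩

end Spirals

/-- Perles' lemma: if a graph on `n` vertices in convex position has more than `k·n`
edges, then its convex-geometric drawing contains a plane path with at least `2k+1`
edges (no two edges of the path cross). -/
theorem stmt5 (n k : ℕ) (hn : 0 < n) (G : SimpleGraph (ZMod n))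
    (hE : k * n < G.edgeSet.ncard) :
    ∃ (u v : ZMod n) (p : G.Walk u v), p.IsPath ∧ 2 * k + 1 ≤ p.length ∧
      (p.support.zip p.support.tail).Pairwise (fun e f => ¬ Crossing n e f) := by
  have : NeZero n := ⟨hn.ne'⟩
  obtain ⟨a, b, hab, ha, hb⟩ := exists_adj_spiral_spiral k G hE
  obtain ⟨w₁, p₁, hlen₁, hpath₁, hplane₁, hsupp₁⟩ := ha.exists_walk hab.ne
  obtain ⟨w₂, p₂, hlen₂, hpath₂, hplane₂, hsupp₂⟩ := hb.exists_walk hab.ne.symm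
  have hdisj : ∀ v ∈ p₁.support, v ∉ p₂.support := fun v h₁ h₂ =>
    (le_arcDist_of_arcDist_lt (hsupp₁ v h₁)).not_gt (hsupp₂ v h₂)
  refine ⟨w₁, w₂, p₁.reverse.append (.cons hab p₂), ?_, ?_, ?_⟩
  · rw [Walk.isPath_def, Walk.support_append, Walk.support_cons, List.tail_cons,
      Walk.support_reverse, List.nodup_append, List.nodup_reverse]
    exact ⟨hpath₁.support_nodup, hpath₂.support_nodup,
      fun v hv₁ w hv₂ hvw => hdisj v (List.mem_reverse.mp hv₁) (hvw ▸ hv₂)⟩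
  · rw [Walk.length_append, Walk.length_reverse, Walk.length_cons, hlen₁, hlen₂]
    omega
  · rw [Walk.zip_support_tail, List.pairwise_map]
    refine hplane₁.reverse.append (d := true) (a := a) (b := b)
      (hplane₂.cons hab fun v hv => (hsupp₂ v hv).le) ?_ ?_
    · intro v hv
      rw [Walk.support_reverse, List.mem_reverse] at hv
      exact (hsupp₁ v hv).le
    · intro v hv
      rcases List.mem_cons.mp hv with rfl | hv
      · exact right_mem_closedArc true b v
      · exact (hsupp₂ v hv).le
end

section
/- Let n points lie in convex position (labelled 0,...,n−1 in cyclic order). For a chord joining points u and v, define its length as min(|u−v|, n−|u−v|) measured along the cycle. Then any family of pairwise disjoint (vertex-disjoint and noncrossing) chords, all of the same length ℓ (with 1 ≤ ℓ ≤ n/2), has at most ⌊n/(ℓ+1)⌋ members. -/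
/-- Cyclic length of a chord: the distance between its endpoints along the cycle. -/
def cycLen (n : ℕ) (e : ZMod n × ZMod n) : ℕ :=
  min (e.2 - e.1).val (e.1 - e.2).val

section Aux
variable {n : ℕ}

lemma sub_val_nat [NeZero n] (a b : ℕ) (ha : a < n) (hb : b < n) :
    ((a : ZMod n) - (b : ZMod n)).val = (a + n - b) % n := by
  have h1 : ((a + n - b : ℕ) : ZMod n) = (a : ZMod n) - b := by
    rw [Nat.cast_sub (by omega), Nat.cast_add, ZMod.natCast_self]
    ring
  rw [← h1, ZMod.val_natCast]

lemma val_eq_zero_iff' [NeZero n] {x y : ZMod n} : (x - y).val = 0 ↔ x = y := by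
  rw [ZMod.val_eq_zero, sub_eq_zero]

lemma inArc_compl [NeZero n] {a b x : ZMod n} (hab : a ≠ b) (hxa : x ≠ a) (hxb : x ≠ b) :
    (inArc n a b x ↔ ¬ inArc n b a x) := by
  have hsn : (x - a).val < n := ZMod.val_lt _
  have htn : (b - a).val < n := ZMod.val_lt _
  set s := (x - a).val with hs
  set t := (b - a).val with ht
  have hs0 : s ≠ 0 := fun h => hxa (val_eq_zero_iff'.1 h)
  have ht0 : t ≠ 0 := fun h => hab (val_eq_zero_iff'.1 h).symm
  have hst : s ≠ t := by
    intro h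
    apply hxb
    have hx : x - a = b - a := by
      rw [← ZMod.natCast_zmod_val (x - a), ← ZMod.natCast_zmod_val (b - a), ← hs, ← ht, h]
    exact sub_left_inj.mp hx
  have hxb' : (x - b).val = (s + n - t) % n := by
    have : x - b = (s : ZMod n) - (t : ZMod n) := by
      rw [hs, ht, ZMod.natCast_zmod_val, ZMod.natCast_zmod_val]
      ring
    rw [this, sub_val_nat s t hsn htn]
  have hab' : (a - b).val = n - t := by
    have h0 : a - b = ((0 : ℕ) : ZMod n) - (t : ZMod n) := by
      rw [ht, ZMod.natCast_zmod_val]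
      push_cast
      ring
    rw [h0, sub_val_nat 0 t (by omega) htn]
    have : 0 + n - t = n - t := by omega
    rw [this, Nat.mod_eq_of_lt (by omega)]
  unfold inArc
  rw [hxb', hab', ← hs, ← ht]
  rcases lt_or_gt_of_ne hst with h | h
  · rw [Nat.mod_eq_of_lt (by omega)]
    constructor
    · intro _ hc; omega
    · intro _; omega
  · have heq : (s + n - t) % n = s - t := by
      have h' : s + n - t = (s - t) + n := by omega
      rw [h', Nat.add_mod_right, Nat.mod_eq_of_lt (by omega)]
    rw [heq]
    constructor
    · intro hc; omega
    · intro hc; exfalso; exact hc ⟨by omega, by omega⟩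

/-- A chord of cyclic length ℓ has endpoints {p, p+ℓ} in some orientation. -/
lemma exists_base [NeZero n] {ℓ : ℕ} (e : ZMod n × ZMod n) (he : cycLen n e = ℓ) :
    (e.2 = e.1 + (ℓ : ZMod n)) ∨ (e.1 = e.2 + (ℓ : ZMod n)) := by
  unfold cycLen at he
  rcases min_cases (e.2 - e.1).val (e.1 - e.2).val with ⟨h, _⟩ | ⟨h, _⟩
  · left
    rw [h] at he
    have : e.2 - e.1 = (ℓ : ZMod n) := by rw [← ZMod.natCast_zmod_val (e.2 - e.1), he]
    linear_combination this
  · right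
    rw [h] at he
    have : e.1 - e.2 = (ℓ : ZMod n) := by rw [← ZMod.natCast_zmod_val (e.1 - e.2), he]
    linear_combination this

end Aux

/-- Base point of a chord: endpoint from which the other is at +ℓ. -/
noncomputable def chordBase (n ℓ : ℕ) (e : ZMod n × ZMod n) : ZMod n :=
  if e.2 = e.1 + (ℓ : ZMod n) then e.1 else e.2

lemma chordBase_spec {n ℓ : ℕ} [NeZero n] (e : ZMod n × ZMod n) (he : cycLen n e = ℓ) :
    (e.1 = chordBase n ℓ e ∧ e.2 = chordBase n ℓ e + (ℓ : ZMod n)) ∨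
    (e.2 = chordBase n ℓ e ∧ e.1 = chordBase n ℓ e + (ℓ : ZMod n)) := by
  unfold chordBase
  rcases exists_base e he with h | h
  · rw [if_pos h]; exact Or.inl ⟨rfl, h⟩
  · by_cases h2 : e.2 = e.1 + (ℓ : ZMod n)
    · rw [if_pos h2]; exact Or.inl ⟨rfl, h2⟩
    · rw [if_neg h2]; exact Or.inr ⟨rfl, h⟩

section Main

variable {n ℓ : ℕ}

lemma core_arc [NeZero n] (h1 : 1 ≤ ℓ) (h2 : 2 * ℓ ≤ n) {p : ZMod n} {d : ℕ}
    (hd0 : 0 < d) (hdl : d < ℓ) :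
    inArc n p (p + (ℓ : ZMod n)) (p + (d : ZMod n)) ∧
    ¬ inArc n p (p + (ℓ : ZMod n)) (p + (d : ZMod n) + (ℓ : ZMod n)) := by
  have hln : ℓ < n := by omega
  have hdn : d < n := by omega
  have e1 : (p + (d : ZMod n) - p).val = d := by
    rw [add_sub_cancel_left, ZMod.val_natCast_of_lt hdn]
  have e2 : (p + (ℓ : ZMod n) - p).val = ℓ := by
    rw [add_sub_cancel_left, ZMod.val_natCast_of_lt hln]
  have e3 : (p + (d : ZMod n) + (ℓ : ZMod n) - p).val = d + ℓ := by
    have h' : p + (d : ZMod n) + (ℓ : ZMod n) - p = ((d + ℓ : ℕ) : ZMod n) := by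
      push_cast; ring
    rw [h', ZMod.val_natCast_of_lt (by omega)]
  constructor
  · exact ⟨by rw [e1]; omega, by rw [e1, e2]; omega⟩
  · intro ⟨hA, hB⟩
    rw [e3, e2] at hB
    omega

lemma base_ne_base_add [NeZero n] (h1 : 1 ≤ ℓ) (h2 : 2 * ℓ ≤ n) (p : ZMod n) :
    p ≠ p + (ℓ : ZMod n) := by
  intro h
  have : (p + (ℓ : ZMod n) - p).val = ℓ := by
    rw [add_sub_cancel_left, ZMod.val_natCast_of_lt (by omega)]
  rw [← h, sub_self, ZMod.val_zero] at this
  omega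

/-- Core contradiction: bases too close forces crossing (given vertex-disjointness). -/
lemma core_contra [NeZero n] (h1 : 1 ≤ ℓ) (h2 : 2 * ℓ ≤ n)
    (e f : ZMod n × ZMod n) (he : cycLen n e = ℓ) (hf : cycLen n f = ℓ)
    (hd : e.1 ≠ f.1 ∧ e.1 ≠ f.2 ∧ e.2 ≠ f.1 ∧ e.2 ≠ f.2)
    {d : ℕ} (hq : chordBase n ℓ f = chordBase n ℓ e + (d : ZMod n)) (hdl : d ≤ ℓ) :
    Crossing n e f := by
  have hln : ℓ < n := by omega
  set p := chordBase n ℓ e with hp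
  set q := chordBase n ℓ f with hq'
  have hpe := chordBase_spec e he
  have hqf := chordBase_spec f hf
  rw [← hp] at hpe
  rw [← hq'] at hqf
  clear_value p q
  have hpmem : p = e.1 ∨ p = e.2 := by
    rcases hpe with ⟨h, _⟩ | ⟨h, _⟩
    · exact Or.inl h.symm
    · exact Or.inr h.symm
  have hpl : p + (ℓ : ZMod n) = e.1 ∨ p + (ℓ : ZMod n) = e.2 := by
    rcases hpe with ⟨_, h⟩ | ⟨_, h⟩
    · exact Or.inr h.symm
    · exact Or.inl h.symm
  have hqmem : q = f.1 ∨ q = f.2 := by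
    rcases hqf with ⟨h, _⟩ | ⟨h, _⟩
    · exact Or.inl h.symm
    · exact Or.inr h.symm
  have hql : q + (ℓ : ZMod n) = f.1 ∨ q + (ℓ : ZMod n) = f.2 := by
    rcases hqf with ⟨_, h⟩ | ⟨_, h⟩
    · exact Or.inr h.symm
    · exact Or.inl h.symm
  obtain ⟨d1, d2, d3, d4⟩ := hd
  -- q is not a vertex of e
  have hd0 : d ≠ 0 := by
    intro h
    subst h
    rw [Nat.cast_zero, add_zero] at hq
    rcases hqmem with h1' | h1' <;> rcases hpmem with h2' | h2' <;>
      first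
      | exact d1 (h2'.symm.trans (hq.symm.trans h1'))
      | exact d2 (h2'.symm.trans (hq.symm.trans h1'))
      | exact d3 (h2'.symm.trans (hq.symm.trans h1'))
      | exact d4 (h2'.symm.trans (hq.symm.trans h1'))
  have hdL : d ≠ ℓ := by
    intro h
    have hqe : q = p + (ℓ : ZMod n) := by rw [← h]; exact hq
    rcases hqmem with h1' | h1' <;> rcases hpl with h2' | h2' <;>
      first
      | exact d1 (h2'.symm.trans (hqe.symm.trans h1'))
      | exact d2 (h2'.symm.trans (hqe.symm.trans h1'))
      | exact d3 (h2'.symm.trans (hqe.symm.trans h1'))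
      | exact d4 (h2'.symm.trans (hqe.symm.trans h1'))
  obtain ⟨hP1, hP2⟩ := core_arc (n := n) (p := p) h1 h2 (Nat.pos_of_ne_zero hd0)
    (lt_of_le_of_ne hdl hdL)
  rw [← hq] at hP1 hP2
  have hpne : p ≠ p + (ℓ : ZMod n) := base_ne_base_add h1 h2 p
  have hqne : q ≠ q + (ℓ : ZMod n) := base_ne_base_add h1 h2 q
  have he12 : e.1 ≠ e.2 := by
    rcases hpe with ⟨ha, hb⟩ | ⟨ha, hb⟩
    · rw [ha, hb]; exact hpne
    · rw [ha, hb]; exact fun h => hpne h.symm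
  have hf12 : f.1 ≠ f.2 := by
    rcases hqf with ⟨ha, hb⟩ | ⟨ha, hb⟩
    · rw [ha, hb]; exact hqne
    · rw [ha, hb]; exact fun h => hqne h.symm
  refine ⟨he12, hf12, d1, d2, d3, d4, ?_⟩
  -- the arc membership iff
  have hPf : (inArc n p (p + (ℓ : ZMod n)) f.1 ↔ ¬ inArc n p (p + (ℓ : ZMod n)) f.2) := by
    rcases hqf with ⟨ha, hb⟩ | ⟨ha, hb⟩
    · rw [← ha] at hP1
      rw [← hb] at hP2
      exact iff_of_true hP1 hP2
    · rw [← ha] at hP1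
      rw [← hb] at hP2
      exact iff_of_false hP2 (not_not_intro hP1)
  rcases hpe with ⟨ha, hb⟩ | ⟨ha, hb⟩
  · rw [ha, hb]
    exact hPf
  · -- ha : e.2 = p, hb : e.1 = p + ℓ
    rw [hb, ha]
    have c1 : inArc n (p + (ℓ : ZMod n)) p f.1 ↔ ¬ inArc n p (p + (ℓ : ZMod n)) f.1 :=
      inArc_compl (fun h => hpne h.symm) (fun h => d1 (hb.trans h.symm))
        (fun h => d3 (ha.trans h.symm))
    have c2 : inArc n (p + (ℓ : ZMod n)) p f.2 ↔ ¬ inArc n p (p + (ℓ : ZMod n)) f.2 :=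
      inArc_compl (fun h => hpne h.symm) (fun h => d2 (hb.trans h.symm))
        (fun h => d4 (ha.trans h.symm))
    rw [c1, c2]
    exact not_iff_not.mpr hPf

end Main

/-- A plane matching (pairwise vertex-disjoint, pairwise noncrossing chords) in which
all chords have the same cyclic length `ℓ` (with `1 ≤ ℓ ≤ n/2`) has at most
`⌊n / (ℓ + 1)⌋` members. -/
theorem stmt7 (n ℓ : ℕ) (h1 : 1 ≤ ℓ) (h2 : 2 * ℓ ≤ n)
    (M : Finset (ZMod n × ZMod n))
    (hlen : ∀ e ∈ M, cycLen n e = ℓ)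
    (hdisj : ∀ e ∈ M, ∀ f ∈ M, e ≠ f →
      e.1 ≠ f.1 ∧ e.1 ≠ f.2 ∧ e.2 ≠ f.1 ∧ e.2 ≠ f.2)
    (hcross : ∀ e ∈ M, ∀ f ∈ M, e ≠ f → ¬ Crossing n e f) :
    M.card ≤ n / (ℓ + 1) := by
  haveI : NeZero n := ⟨by omega⟩
  set I : (ZMod n × ZMod n) → Finset (ZMod n) :=
    fun e => (Finset.range (ℓ + 1)).image (fun k : ℕ => chordBase n ℓ e + (k : ZMod n)) with hI
  have hcard : ∀ e, (I e).card = ℓ + 1 := by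
    intro e
    rw [hI]
    rw [Finset.card_image_of_injOn, Finset.card_range]
    intro a ha b hb hab
    simp only [Finset.coe_range, Set.mem_Iio] at ha hb
    have hv : ((a : ZMod n)).val = ((b : ZMod n)).val := by
      rw [add_left_cancel hab]
    rwa [ZMod.val_natCast_of_lt (by omega), ZMod.val_natCast_of_lt (by omega)] at hv
  have hdisjI : ∀ e ∈ M, ∀ f ∈ M, e ≠ f → Disjoint (I e) (I f) := by
    intro e heM f hfM hef
    rw [Finset.disjoint_left]
    intro x hxe hxf
    simp only [hI, Finset.mem_image, Finset.mem_range] at hxe hxf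
    obtain ⟨i, hi, hie⟩ := hxe
    obtain ⟨j, hj, hjf⟩ := hxf
    have hcomb : chordBase n ℓ e + (i : ZMod n) = chordBase n ℓ f + (j : ZMod n) :=
      hie.trans hjf.symm
    rcases le_total j i with hji | hij
    · have hq : chordBase n ℓ f = chordBase n ℓ e + ((i - j : ℕ) : ZMod n) := by
        rw [Nat.cast_sub hji]
        linear_combination -hcomb
      exact hcross e heM f hfM hef
        (core_contra h1 h2 e f (hlen e heM) (hlen f hfM) (hdisj e heM f hfM hef) hq (by omega))
    · have hq : chordBase n ℓ e = chordBase n ℓ f + ((j - i : ℕ) : ZMod n) := by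
        rw [Nat.cast_sub hij]
        linear_combination hcomb
      exact hcross f hfM e heM hef.symm
        (core_contra h1 h2 f e (hlen f hfM) (hlen e heM) (hdisj f hfM e heM hef.symm) hq
          (by omega))
  have hsum : M.card * (ℓ + 1) ≤ n := by
    have hb := Finset.card_biUnion hdisjI
    have hle : (M.biUnion I).card ≤ n := by
      have hc := Finset.card_le_univ (M.biUnion I)
      rwa [ZMod.card n] at hc
    calc M.card * (ℓ + 1) = ∑ e ∈ M, (I e).card := by
           rw [Finset.sum_congr rfl (fun e _ => hcard e), Finset.sum_const, smul_eq_mul]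
         _ = (M.biUnion I).card := hb.symm
         _ ≤ n := hle
  rw [Nat.le_div_iff_mul_le (by omega)]
  exact hsum
end

section
/- Let d ≥ 2 and let G be a d-regular graph on n vertices drawn with vertices in convex position such that the drawing is length-regular with length profile (ℓ_1, ℓ_2, ..., ℓ_d) where ℓ_1 > ℓ_2 > ... > ℓ_d (all lengths distinct). Then the total number of pairs of crossing edges in the drawing equals (n/2) · Σ_{i=1}^{d} (ℓ_i − 1)(i − 1/2), i.e., twice the number of crossings equals n · Σ_{i=1}^{d} (ℓ_i − 1)(2i − 1) / 2. -/
/-- Cyclic length of an (unordered) chord. -/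
def sLen (n : ℕ) : Sym2 (ZMod n) → ℕ :=
  Sym2.lift ⟨fun a b => min (b - a).val (a - b).val, fun a b => min_comm _ _⟩

/-- Crossing of unordered chords. -/
def CrossSym (n : ℕ) (e f : Sym2 (ZMod n)) : Prop :=
  ∃ a b c d : ZMod n, e = s(a, b) ∧ f = s(c, d) ∧ Crossing n (a, b) (c, d)

open Finset

instance (n : ℕ) (a b x : ZMod n) : Decidable (inArc n a b x) :=
  decidable_of_iff (0 < (x - a).val ∧ (x - a).val < (b - a).val) Iff.rfl

instance (n : ℕ) (e f : ZMod n × ZMod n) : Decidable (Crossing n e f) :=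
  decidable_of_iff (e.1 ≠ e.2 ∧ f.1 ≠ f.2 ∧ e.1 ≠ f.1 ∧ e.1 ≠ f.2 ∧ e.2 ≠ f.1 ∧ e.2 ≠ f.2 ∧
    (inArc n e.1 e.2 f.1 ↔ ¬ inArc n e.1 e.2 f.2)) Iff.rfl

instance (n : ℕ) [NeZero n] (e f : Sym2 (ZMod n)) : Decidable (CrossSym n e f) :=
  decidable_of_iff (∃ a b c d : ZMod n, e = s(a, b) ∧ f = s(c, d) ∧ Crossing n (a, b) (c, d))
    Iff.rfl

section Aux

variable {n : ℕ} [NeZero n]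

private lemma sub_val_pos {p q : ZMod n} (h : p ≠ q) : 0 < (p - q).val :=
  Nat.pos_of_ne_zero fun h0 => h (sub_eq_zero.mp ((ZMod.val_eq_zero _).mp h0))

private lemma val_sub_ne {a p q : ZMod n} (h : p ≠ q) : (p - a).val ≠ (q - a).val := by
  intro he
  exact h (sub_left_inj.mp (ZMod.val_injective n he))

private lemma val_sub_add_val_sub {a b : ZMod n} (h : a ≠ b) :
    (a - b).val + (b - a).val = n := by
  have hne : b - a ≠ 0 := sub_ne_zero.mpr h.symm
  have : NeZero (b - a) := ⟨hne⟩
  have hab : a - b = -(b - a) := by ring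
  rw [hab, ZMod.val_neg_of_ne_zero]
  have h1 := ZMod.val_lt (b - a)
  have h2 := sub_val_pos h.symm
  omega

private lemma val_sub_add_val (p q : ZMod n) : (p - q).val = (p.val + (n - q.val)) % n := by
  by_cases h : q = 0
  · subst h
    simp only [sub_zero, ZMod.val_zero, Nat.sub_zero]
    rw [Nat.add_mod_right, Nat.mod_eq_of_lt (ZMod.val_lt p)]
  · have : NeZero q := ⟨h⟩
    rw [sub_eq_add_neg, ZMod.val_add, ZMod.val_neg_of_ne_zero]

private lemma mod_resolve {x y : ℕ} (hx : x < n) (hy : y < n) :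
    (y ≤ x ∧ (x + (n - y)) % n = x - y) ∨ (x < y ∧ (x + (n - y)) % n = n + x - y) := by
  rcases le_or_gt y x with h | h
  · left
    refine ⟨h, ?_⟩
    have hxy : x + (n - y) = (x - y) + n := by omega
    rw [hxy, Nat.add_mod_right, Nat.mod_eq_of_lt (by omega)]
  · right
    refine ⟨h, ?_⟩
    rw [Nat.mod_eq_of_lt (by omega)]
    omega

private lemma val_sub_rebase (a u v : ZMod n) :
    (u - v).val = ((u - a).val + (n - (v - a).val)) % n := by
  have h : u - v = (u - a) - (v - a) := by ring
  rw [h, val_sub_add_val]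

private lemma val_sub_cases (a u v : ZMod n) :
    ((v - a).val ≤ (u - a).val ∧ (u - v).val = (u - a).val - (v - a).val) ∨
    ((u - a).val < (v - a).val ∧ (u - v).val = n + (u - a).val - (v - a).val) := by
  have e := val_sub_rebase a u v
  rcases mod_resolve (ZMod.val_lt (u - a)) (ZMod.val_lt (v - a)) with ⟨h1, h2⟩ | ⟨h1, h2⟩
  · exact Or.inl ⟨h1, by rw [e, h2]⟩
  · exact Or.inr ⟨h1, by rw [e, h2]⟩

private lemma crossing_symm {a b c d : ZMod n} (h : Crossing n (a, b) (c, d)) :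
    Crossing n (c, d) (a, b) := by
  obtain ⟨hab, hcd, hac, had, hbc, hbd, hiff⟩ := h
  refine ⟨hcd, hab, fun hh => hac hh.symm, fun hh => hbc hh.symm,
    fun hh => had hh.symm, fun hh => hbd hh.symm, ?_⟩
  simp only [inArc] at hiff ⊢
  have hβ := sub_val_pos (show b ≠ a from hab.symm)
  have hγ := sub_val_pos (show c ≠ a from hac.symm)
  have hδ := sub_val_pos (show d ≠ a from had.symm)
  have hβγ := val_sub_ne (a := a) (show b ≠ c from hbc)
  have hβδ := val_sub_ne (a := a) (show b ≠ d from hbd)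
  have hγδ := val_sub_ne (a := a) hcd
  have E1 := val_sub_cases a a c
  have E2 := val_sub_cases a d c
  have E3 := val_sub_cases a b c
  have E0 : (a - a).val = 0 := by rw [sub_self, ZMod.val_zero]
  rw [E0] at E1
  have l1 := ZMod.val_lt (b - a)
  have l2 := ZMod.val_lt (c - a)
  have l3 := ZMod.val_lt (d - a)
  omega

private lemma crossing_swap_left {a b c d : ZMod n} (h : Crossing n (b, a) (c, d)) :
    Crossing n (a, b) (c, d) := by
  obtain ⟨hba, hcd, hbc, hbd, hac, had, hiff⟩ := h
  refine ⟨fun hh => hba hh.symm, hcd, hac, had, hbc, hbd, ?_⟩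
  simp only [inArc] at hiff ⊢
  have hβ := sub_val_pos (show b ≠ a from hba)
  have hγ := sub_val_pos (show c ≠ a from hac.symm)
  have hδ := sub_val_pos (show d ≠ a from had.symm)
  have hβγ := val_sub_ne (a := a) (show b ≠ c from hbc)
  have hβδ := val_sub_ne (a := a) (show b ≠ d from hbd)
  have hγδ := val_sub_ne (a := a) hcd
  have E1 := val_sub_cases a c b
  have E2 := val_sub_cases a a b
  have E3 := val_sub_cases a d b
  have E0 : (a - a).val = 0 := by rw [sub_self, ZMod.val_zero]
  rw [E0] at E2
  have l1 := ZMod.val_lt (b - a)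
  have l2 := ZMod.val_lt (c - a)
  have l3 := ZMod.val_lt (d - a)
  omega

private lemma crossing_swap_right {a b c d : ZMod n} (h : Crossing n (a, b) (d, c)) :
    Crossing n (a, b) (c, d) := by
  obtain ⟨hab, hdc, had, hac, hbd, hbc, hiff⟩ := h
  exact ⟨hab, hdc.symm, hac, had, hbc, hbd, by tauto⟩

private lemma crossSym_iff {a b c d : ZMod n} :
    CrossSym n s(a, b) s(c, d) ↔ Crossing n (a, b) (c, d) := by
  constructor
  · rintro ⟨a', b', c', d', he, hf, hc⟩
    rw [Sym2.eq_iff] at he hf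
    rcases he with ⟨rfl, rfl⟩ | ⟨rfl, rfl⟩ <;> rcases hf with ⟨rfl, rfl⟩ | ⟨rfl, rfl⟩
    · exact hc
    · exact crossing_swap_right hc
    · exact crossing_swap_left hc
    · exact crossing_swap_left (crossing_swap_right hc)
  · intro h
    exact ⟨a, b, c, d, rfl, rfl, h⟩

private lemma crossSym_symm {e f : Sym2 (ZMod n)} (h : CrossSym n e f) : CrossSym n f e := by
  obtain ⟨a, b, c, d, he, hf, hc⟩ := h
  exact ⟨c, d, a, b, hf, he, crossing_symm hc⟩

private lemma sLen_mk (a b : ZMod n) : sLen n s(a, b) = min (b - a).val (a - b).val := rfl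

private lemma two_mul_sLen_le (e : Sym2 (ZMod n)) : 2 * sLen n e ≤ n := by
  induction e using Sym2.ind with
  | _ a b =>
    rw [sLen_mk]
    rcases eq_or_ne a b with rfl | h
    · simp
    · have := val_sub_add_val_sub h
      omega

private lemma sLen_rep {e : Sym2 (ZMod n)} {L : ℕ} (hL : sLen n e = L) (h1 : 1 ≤ L) :
    ∃ x : ZMod n, e = s(x, x + (L : ZMod n)) ∧ ((L : ZMod n)).val = L := by
  have hLn : L < n := by have := two_mul_sLen_le e; omega
  have hcast : ((L : ZMod n)).val = L := ZMod.val_cast_of_lt hLn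
  induction e using Sym2.ind with
  | _ a b =>
    rw [sLen_mk] at hL
    rcases min_cases ((b - a).val) ((a - b).val) with ⟨hm, _⟩ | ⟨hm, _⟩
    · refine ⟨a, ?_, hcast⟩
      have hv : (b - a).val = ((L : ZMod n)).val := by rw [hcast, ← hL, hm]
      have hba : b - a = (L : ZMod n) := ZMod.val_injective n hv
      have : b = a + (L : ZMod n) := by rw [← hba]; ring
      rw [this]
    · refine ⟨b, ?_, hcast⟩
      have hv : (a - b).val = ((L : ZMod n)).val := by rw [hcast, ← hL, hm]
      have hab : a - b = (L : ZMod n) := ZMod.val_injective n hv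
      have : a = b + (L : ZMod n) := by rw [← hab]; ring
      rw [this, Sym2.eq_swap]

/-- Core geometric lemma: an edge of length `L ≥ m` with an endpoint strictly inside
the arc of a chord of length `m` crosses that chord, and its other endpoint is
strictly outside the arc. -/
private lemma core_cross {m L : ℕ} {x y z : ZMod n}
    (hm1 : 1 ≤ m) (hmL : m ≤ L) (hLn : 2 * L ≤ n)
    (hLe : sLen n s(y, z) = L)
    (hy1 : 0 < (y - x).val) (hy2 : (y - x).val < m) (hmv : ((m : ZMod n)).val = m) :
    Crossing n (x, x + (m : ZMod n)) (y, z) ∧ ¬ (0 < (z - x).val ∧ (z - x).val < m) := by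
  have harc : ((x + (m : ZMod n)) - x).val = m := by rw [add_sub_cancel_left, hmv]
  rw [sLen_mk] at hLe
  have hyz : y ≠ z := by
    rintro rfl
    simp only [sub_self, ZMod.val_zero, min_self] at hLe
    omega
  have hw := val_sub_add_val_sub (show z ≠ y from hyz.symm)
  have hzx : (z - x).val = ((z - y).val + (y - x).val) % n := by
    rw [← ZMod.val_add]
    congr 1
    ring
  have hs : m < (z - x).val ∧ (z - x).val < n := by
    have hcase : (z - y).val = L ∨ (y - z).val = L := by
      rcases min_eq_iff.mp hLe with ⟨h, _⟩ | ⟨h, _⟩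
      · exact Or.inl h
      · exact Or.inr h
    rcases hcase with h | h
    · have hlt : (z - y).val + (y - x).val < n := by omega
      rw [Nat.mod_eq_of_lt hlt] at hzx
      omega
    · have hzy : (z - y).val = n - L := by omega
      have hlt : (z - y).val + (y - x).val < n := by omega
      rw [Nat.mod_eq_of_lt hlt] at hzx
      omega
  have hxy : x ≠ y := fun h => by rw [h, sub_self, ZMod.val_zero] at hy1; omega
  have hxz : x ≠ z := fun h => by rw [h, sub_self, ZMod.val_zero] at hs; omega
  have hmy : x + (m : ZMod n) ≠ y := by
    intro h
    have : (y - x).val = m := by rw [← h, add_sub_cancel_left, hmv]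
    omega
  have hmz : x + (m : ZMod n) ≠ z := by
    intro h
    have : (z - x).val = m := by rw [← h, add_sub_cancel_left, hmv]
    omega
  have hxm : x ≠ x + (m : ZMod n) := by
    intro h
    have h0 : ((m : ZMod n)) = 0 := by
      have := left_eq_add.mp h
      exact this
    rw [h0, ZMod.val_zero] at hmv
    omega
  refine ⟨⟨hxm, hyz, hxy, hxz, hmy, hmz, ?_⟩, by omega⟩
  simp only [inArc, harc]
  omega

end Aux

section Counting

variable {d n : ℕ} [NeZero n] {E : Finset (Sym2 (ZMod n))} {ℓ : Fin d → ℕ}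

/-- Per-length crossing count: for `f ∈ E` of length `ℓ j` and `i ≤ j`, the number of
edges of length `ℓ i` crossing `f` is exactly `ℓ j - 1`. -/
private lemma peri (hanti : StrictAnti ℓ) (hpos : ∀ i, 1 ≤ ℓ i)
    (hreg : ∀ (v : ZMod n) (i : Fin d), ∃! e, e ∈ E ∧ v ∈ e ∧ sLen n e = ℓ i)
    {f : Sym2 (ZMod n)} (hf : f ∈ E) {j i : Fin d} (hfl : sLen n f = ℓ j) (hij : i ≤ j) :
    (E.filter fun e => sLen n e = ℓ i ∧ CrossSym n e f).card = ℓ j - 1 := by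
  set m := ℓ j with hm
  have hm1 : 1 ≤ m := hpos j
  have h2m : 2 * m ≤ n := by rw [← hfl]; exact two_mul_sLen_le f
  have hmn : m < n := by omega
  have hmL : m ≤ ℓ i := hanti.antitone hij
  obtain ⟨x, hx, hmv⟩ := sLen_rep hfl hm1
  set A : Finset (ZMod n) :=
    univ.filter fun y => 0 < (y - x).val ∧ (y - x).val < m with hA
  have hcardA : A.card = m - 1 := by
    have : A.card = (Finset.Ioo 0 m).card := by
      apply Finset.card_bij (fun y _ => (y - x).val)
      · intro y hy
        rw [hA, Finset.mem_filter] at hy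
        rw [Finset.mem_Ioo]
        exact hy.2
      · intro y1 h1 y2 h2 he
        exact sub_left_inj.mp (ZMod.val_injective n he)
      · intro t ht
        rw [Finset.mem_Ioo] at ht
        refine ⟨x + (t : ZMod n), ?_, ?_⟩
        · rw [hA, Finset.mem_filter]
          refine ⟨Finset.mem_univ _, ?_⟩
          rw [add_sub_cancel_left, ZMod.val_cast_of_lt (by omega)]
          exact ht
        · rw [add_sub_cancel_left, ZMod.val_cast_of_lt (by omega)]
    rw [this, Nat.card_Ioo]
    omega
  rw [← hcardA]
  symm
  apply Finset.card_bij (fun y _ => (hreg y i).choose)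
  · intro y hy
    rw [hA, Finset.mem_filter] at hy
    obtain ⟨he, hye, hle⟩ := (hreg y i).choose_spec.1
    rw [Finset.mem_filter]
    refine ⟨he, hle, ?_⟩
    obtain ⟨z, hz⟩ := Sym2.mem_iff_exists.mp hye
    have hcc := core_cross (n := n) hm1 hmL
      (by rw [← hle]; exact two_mul_sLen_le _) (by rw [← hz]; exact hle)
      hy.2.1 hy.2.2 hmv
    exact ⟨y, z, x, x + (m : ZMod n), hz, hx, crossing_symm hcc.1⟩
  · intro y1 h1 y2 h2 he
    rw [hA, Finset.mem_filter] at h1 h2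
    obtain ⟨he1, hy1e, hl1⟩ := (hreg y1 i).choose_spec.1
    obtain ⟨z, hz⟩ := Sym2.mem_iff_exists.mp hy1e
    have hcc := core_cross (n := n) hm1 hmL
      (by rw [← hl1]; exact two_mul_sLen_le _) (by rw [← hz]; exact hl1)
      h1.2.1 h1.2.2 hmv
    obtain ⟨he2, hy2e, hl2⟩ := (hreg y2 i).choose_spec.1
    rw [← he, hz] at hy2e
    rcases Sym2.mem_iff.mp hy2e with h | h
    · exact h.symm
    · exfalso
      exact hcc.2 ⟨h ▸ h2.2.1, h ▸ h2.2.2⟩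
  · intro e hee
    rw [Finset.mem_filter] at hee
    obtain ⟨heE, hle, hcross⟩ := hee
    obtain ⟨p, q, c', d', rfl, hfeq, hcr⟩ := hcross
    rw [hx] at hfeq
    have hcr' : Crossing n (p, q) (x, x + (m : ZMod n)) := by
      rcases Sym2.eq_iff.mp hfeq with ⟨h1, h2⟩ | ⟨h1, h2⟩
      · subst h1; subst h2; exact hcr
      · subst h1; subst h2; exact crossing_swap_right hcr
    have hcr'' := crossing_symm hcr'
    obtain ⟨hxm, hpq, hxp, hxq, hmp, hmq, hiff⟩ := hcr''
    have harc : ((x + (m : ZMod n)) - x).val = m := by rw [add_sub_cancel_left, hmv]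
    simp only [inArc, harc] at hiff
    have hone : (0 < (p - x).val ∧ (p - x).val < m) ∨ (0 < (q - x).val ∧ (q - x).val < m) := by
      tauto
    have key : ∀ y : ZMod n, y ∈ s(p, q) → 0 < (y - x).val → (y - x).val < m →
        ∃ a ∈ A, (hreg a i).choose = s(p, q) := by
      intro y hy h1 h2
      refine ⟨y, ?_, ?_⟩
      · rw [hA, Finset.mem_filter]
        exact ⟨Finset.mem_univ _, h1, h2⟩
      · exact ((hreg y i).choose_spec.2 _ ⟨heE, hy, hle⟩).symm
    rcases hone with ⟨h1, h2⟩ | ⟨h1, h2⟩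
    · obtain ⟨a, ha, hh⟩ := key p (Sym2.mem_mk_left p q) h1 h2
      exact ⟨a, ha, hh⟩
    · obtain ⟨a, ha, hh⟩ := key q (Sym2.mem_mk_right p q) h1 h2
      exact ⟨a, ha, hh⟩

/-- Each length class has exactly `n/2` edges (fraction-freely, twice the count is `n`). -/
private lemma ecount (hpos : ∀ i, 1 ≤ ℓ i)
    (hreg : ∀ (v : ZMod n) (i : Fin d), ∃! e, e ∈ E ∧ v ∈ e ∧ sLen n e = ℓ i) (i : Fin d) :
    2 * (E.filter fun e => sLen n e = ℓ i).card = n := by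
  set Ei := E.filter fun e => sLen n e = ℓ i with hEi
  have key : ∑ e ∈ Ei, (univ.filter fun v => v ∈ e).card
      = ∑ v : ZMod n, (Ei.filter fun e => v ∈ e).card := by
    simp only [Finset.card_filter]
    rw [Finset.sum_comm]
  have card_mem : ∀ e ∈ Ei, (univ.filter fun v => v ∈ e).card = 2 := by
    intro e he
    rw [hEi, Finset.mem_filter] at he
    obtain ⟨a, heq, hmv⟩ := sLen_rep he.2 (hpos i)
    have hne : a ≠ a + ((ℓ i : ZMod n)) := by
      intro h
      have h0 := left_eq_add.mp h
      rw [h0, ZMod.val_zero] at hmv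
      have := hpos i
      omega
    rw [heq]
    rw [show univ.filter (fun v => v ∈ s(a, a + ((ℓ i : ZMod n)))) = {a, a + ((ℓ i : ZMod n))}
      from by ext v; simp [Sym2.mem_iff]]
    exact Finset.card_pair hne
  have card_v : ∀ v : ZMod n, (Ei.filter fun e => v ∈ e).card = 1 := by
    intro v
    rw [Finset.card_eq_one]
    obtain ⟨e0, he0, hu⟩ := hreg v i
    refine ⟨e0, ?_⟩
    ext e
    rw [Finset.mem_filter, hEi, Finset.mem_filter, Finset.mem_singleton]
    constructor
    · rintro ⟨⟨h1, h2⟩, h3⟩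
      exact hu e ⟨h1, h3, h2⟩
    · rintro rfl
      exact ⟨⟨he0.1, he0.2.2⟩, he0.2.1⟩
  calc 2 * Ei.card = ∑ e ∈ Ei, 2 := by rw [Finset.sum_const, smul_eq_mul, mul_comm]
    _ = ∑ e ∈ Ei, (univ.filter fun v => v ∈ e).card := by
        exact (Finset.sum_congr rfl card_mem).symm
    _ = ∑ v : ZMod n, (Ei.filter fun e => v ∈ e).card := key
    _ = ∑ v : ZMod n, 1 := Finset.sum_congr rfl fun v _ => card_v v
    _ = n := by rw [Finset.sum_const, smul_eq_mul, mul_one, Finset.card_univ, ZMod.card]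

private lemma card_product_filter {α : Type*} [DecidableEq α] (s t : Finset α)
    (P : α → α → Prop) [∀ a b, Decidable (P a b)] :
    ((s ×ˢ t).filter fun p => P p.1 p.2).card = ∑ f ∈ t, (s.filter fun e => P e f).card := by
  simp only [Finset.card_filter]
  rw [Finset.sum_product, Finset.sum_comm]

end Counting

/-- A length-regular convex drawing of a `d`-regular graph on `n` vertices with
strictly decreasing length profile `ℓ 0 > ℓ 1 > ⋯ > ℓ (d-1)` has exactly
`(n/2) · ∑ᵢ (ℓᵢ − 1)(i − 1/2)` crossings; stated fraction-free, twice the number of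
ordered crossing pairs equals `n · ∑ᵢ (ℓᵢ − 1)(2i + 1)` (indices `i` zero-based). -/
theorem stmt8 (d n : ℕ) (hd : 2 ≤ d) (hn : 0 < n)
    (E : Finset (Sym2 (ZMod n))) (ℓ : Fin d → ℕ)
    (hanti : StrictAnti ℓ) (hpos : ∀ i, 1 ≤ ℓ i)
    (hreg : ∀ (v : ZMod n) (i : Fin d), ∃! e, e ∈ E ∧ v ∈ e ∧ sLen n e = ℓ i)
    (hall : ∀ e ∈ E, ∃ i, sLen n e = ℓ i) :
    2 * {p : Sym2 (ZMod n) × Sym2 (ZMod n) |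
          p.1 ∈ E ∧ p.2 ∈ E ∧ CrossSym n p.1 p.2}.ncard
      = n * ∑ i : Fin d, (ℓ i - 1) * (2 * (i : ℕ) + 1) := by
  haveI : NeZero n := ⟨hn.ne'⟩
  set Ei : Fin d → Finset (Sym2 (ZMod n)) := fun i => E.filter fun e => sLen n e = ℓ i with hEi
  set C : Finset (Sym2 (ZMod n) × Sym2 (ZMod n)) :=
    (E ×ˢ E).filter fun p => CrossSym n p.1 p.2 with hC
  have hset : {p : Sym2 (ZMod n) × Sym2 (ZMod n) |
      p.1 ∈ E ∧ p.2 ∈ E ∧ CrossSym n p.1 p.2} = ↑C := by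
    ext p
    simp [hC, Finset.mem_filter, Finset.mem_product, and_assoc]
  rw [hset, Set.ncard_coe_finset]
  -- decompose C by length classes
  have hdecomp : C = (univ : Finset (Fin d × Fin d)).biUnion
      fun ij => (Ei ij.1 ×ˢ Ei ij.2).filter fun p => CrossSym n p.1 p.2 := by
    ext p
    simp only [hC, hEi, Finset.mem_biUnion, Finset.mem_filter, Finset.mem_product,
      Finset.mem_univ, true_and]
    constructor
    · rintro ⟨⟨h1, h2⟩, h3⟩
      obtain ⟨i, hi⟩ := hall p.1 h1
      obtain ⟨j, hj⟩ := hall p.2 h2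
      exact ⟨(i, j), ⟨⟨h1, hi⟩, ⟨h2, hj⟩⟩, h3⟩
    · rintro ⟨ij, ⟨⟨h1, _⟩, ⟨h2, _⟩⟩, h3⟩
      exact ⟨⟨h1, h2⟩, h3⟩
  have hdisj : ∀ x ∈ (univ : Finset (Fin d × Fin d)), ∀ y ∈ univ, x ≠ y →
      Disjoint ((Ei x.1 ×ˢ Ei x.2).filter fun p => CrossSym n p.1 p.2)
        ((Ei y.1 ×ˢ Ei y.2).filter fun p => CrossSym n p.1 p.2) := by
    intro x _ y _ hxy
    rw [Finset.disjoint_left]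
    intro p hp hq
    simp only [hEi, Finset.mem_filter, Finset.mem_product] at hp hq
    apply hxy
    have h1 : ℓ x.1 = ℓ y.1 := by rw [← hp.1.1.2, hq.1.1.2]
    have h2 : ℓ x.2 = ℓ y.2 := by rw [← hp.1.2.2, hq.1.2.2]
    exact Prod.ext_iff.mpr ⟨hanti.injective h1, hanti.injective h2⟩
  rw [hdecomp, Finset.card_biUnion hdisj]
  -- count each block
  have block : ∀ i j : Fin d,
      2 * ((Ei i ×ˢ Ei j).filter fun p => CrossSym n p.1 p.2).card
        = if i ≤ j then n * (ℓ j - 1) else n * (ℓ i - 1) := by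
    have le_case : ∀ i j : Fin d, i ≤ j →
        2 * ((Ei i ×ˢ Ei j).filter fun p => CrossSym n p.1 p.2).card = n * (ℓ j - 1) := by
      intro i j hij
      rw [card_product_filter]
      have step : ∀ f ∈ Ei j, ((Ei i).filter fun e => CrossSym n e f).card = ℓ j - 1 := by
        intro f hf
        rw [hEi, Finset.mem_filter] at hf
        rw [hEi, Finset.filter_filter]
        exact peri hanti hpos hreg hf.1 hf.2 hij
      rw [Finset.sum_congr rfl step, Finset.sum_const, smul_eq_mul]
      rw [show 2 * ((Ei j).card * (ℓ j - 1)) = 2 * (Ei j).card * (ℓ j - 1) by ring,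
        hEi, ecount hpos hreg j]
    intro i j
    split_ifs with h
    · exact le_case i j h
    · push_neg at h
      have hswap : ((Ei i ×ˢ Ei j).filter fun p => CrossSym n p.1 p.2).card
          = ((Ei j ×ˢ Ei i).filter fun p => CrossSym n p.1 p.2).card := by
        apply Finset.card_bij (fun p _ => (p.2, p.1))
        · intro p hp
          simp only [Finset.mem_filter, Finset.mem_product] at hp ⊢
          exact ⟨⟨hp.1.2, hp.1.1⟩, crossSym_symm hp.2⟩
        · intro p1 h1 p2 h2 he
          have h' := Prod.ext_iff.mp he
          exact Prod.ext_iff.mpr ⟨h'.2, h'.1⟩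
        · intro p hp
          simp only [Finset.mem_filter, Finset.mem_product] at hp
          exact ⟨(p.2, p.1), by
            simp only [Finset.mem_filter, Finset.mem_product]
            exact ⟨⟨hp.1.2, hp.1.1⟩, crossSym_symm hp.2⟩, rfl⟩
      rw [hswap]
      exact le_case j i h.le
  -- final summation
  rw [Finset.mul_sum]
  rw [Finset.sum_congr rfl fun ij _ => block ij.1 ij.2]
  simp only [Fintype.sum_prod_type]
  have hsplit : ∀ i j : Fin d, (if i ≤ j then n * (ℓ j - 1) else n * (ℓ i - 1))
      = (if i ≤ j then n * (ℓ j - 1) else 0) + (if i ≤ j then 0 else n * (ℓ i - 1)) := by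
    intro i j
    split <;> simp
  rw [Finset.sum_congr rfl fun i _ => Finset.sum_congr rfl fun j _ => hsplit i j]
  rw [Finset.sum_congr rfl fun i (_ : i ∈ univ) => Finset.sum_add_distrib,
    Finset.sum_add_distrib]
  have part1 : ∑ i : Fin d, ∑ j : Fin d, (if i ≤ j then n * (ℓ j - 1) else 0)
      = ∑ j : Fin d, n * (ℓ j - 1) * (j + 1) := by
    rw [Finset.sum_comm]
    refine Finset.sum_congr rfl fun j _ => ?_
    rw [← Finset.sum_filter, Finset.sum_const, smul_eq_mul,
      show (univ.filter fun i => i ≤ j) = Finset.Iic j from by ext i; simp [Finset.mem_Iic],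
      Fin.card_Iic, mul_comm]
  have part2 : ∑ i : Fin d, ∑ j : Fin d, (if i ≤ j then 0 else n * (ℓ i - 1))
      = ∑ i : Fin d, n * (ℓ i - 1) * i := by
    refine Finset.sum_congr rfl fun i _ => ?_
    have flip : ∀ j : Fin d, (if i ≤ j then 0 else n * (ℓ i - 1))
        = (if j < i then n * (ℓ i - 1) else 0) := by
      intro j
      rcases le_or_gt i j with h | h
      · simp [h, not_lt.mpr h]
      · simp [h, not_le.mpr h]
    rw [Finset.sum_congr rfl fun j _ => flip j, ← Finset.sum_filter, Finset.sum_const,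
      smul_eq_mul,
      show (univ.filter fun j => j < i) = Finset.Iio i from by ext j; simp [Finset.mem_Iio],
      Fin.card_Iio, mul_comm]
  rw [part1, part2, ← Finset.sum_add_distrib, Finset.mul_sum]
  refine Finset.sum_congr rfl fun i _ => ?_
  ring
end

section
/- A finite tree T is a caterpillar if and only if T does not contain, as a subgraph, the tree obtained from the star K_{1,3} by subdividing each of its three edges exactly once (i.e., the spider with three legs of length 2). -/
/-! A path `p` passes through the centre `c` of a subdivided claw at most once, so it misses one
of the edges `c wᵢ`. In a tree that edge is a bridge, yet without it its ends stay connected: the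
legs through `wᵢ` and through another `wⱼ` lead to vertices dominated by `p`, and `p` itself avoids
the edge. Conversely, on a longest path every vertex is dominated: an undominated vertex gives a
path `z - y - y'` leaving the path at `z`; maximality keeps `z` at distance at least two from both
ends, and its four nearest vertices along the path complete the claw with `y` and `y'`. -/

namespace SimpleGraph

variable {V : Type*} {G : SimpleGraph V} {u v : V} {p : G.Walk u v}

def Walk.Dominating (p : G.Walk u v) : Prop :=
  ∀ w, w ∈ p.support ∨ ∃ x ∈ p.support, G.Adj w x

def ContainsSubdividedClaw (G : SimpleGraph V) : Prop :=
  ∃ c w₁ w₂ w₃ x₁ x₂ x₃ : V,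
    ([c, w₁, w₂, w₃, x₁, x₂, x₃] : List V).Nodup ∧
    G.Adj c w₁ ∧ G.Adj c w₂ ∧ G.Adj c w₃ ∧
    G.Adj w₁ x₁ ∧ G.Adj w₂ x₂ ∧ G.Adj w₃ x₃

namespace Walk

lemma IsPath.ncard_neighborSet_toSubgraph_le_two (hp : p.IsPath) (c : V) :
    (p.toSubgraph.neighborSet c).ncard ≤ 2 := by
  rcases (p.toSubgraph.neighborSet c).eq_empty_or_nonempty with h | ⟨w, hw⟩
  · simp [h]
  have hnil : ¬ p.Nil := not_nil_of_adj_toSubgraph hw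
  obtain ⟨i, rfl, hi⟩ := mem_support_iff_exists_getVert.mp (p.mem_verts_toSubgraph.mp hw.fst_mem)
  rcases Nat.eq_zero_or_pos i with rfl | hi₀
  · simp [hp.neighborSet_toSubgraph_startpoint hnil]
  rcases hi.lt_or_eq with hi | rfl
  · exact (hp.ncard_neighborSet_toSubgraph_internal_eq_two hi₀.ne' hi).le
  · simp [hp.neighborSet_toSubgraph_endpoint hnil]

lemma IsPath.incident_edges_not_all_mem (hp : p.IsPath) {c w₁ w₂ w₃ : V}
    (h₁₂ : w₁ ≠ w₂) (h₁₃ : w₁ ≠ w₃) (h₂₃ : w₂ ≠ w₃) :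
    s(c, w₁) ∉ p.edges ∨ s(c, w₂) ∉ p.edges ∨ s(c, w₃) ∉ p.edges := by
  by_contra! h
  have := hp.ncard_neighborSet_toSubgraph_le_two c
  rw [← not_lt, Set.two_lt_ncard_iff p.finite_neighborSet_toSubgraph] at this
  simp only [Subgraph.mem_neighborSet, adj_toSubgraph_iff_mem_edges] at this
  exact this ⟨w₁, w₂, w₃, h.1, h.2.1, h.2.2, h₁₂, h₁₃, h₂₃⟩

lemma reachable_deleteEdges_of_mem_support {e : Sym2 V} (he : e ∉ p.edges) {x y : V}
    (hx : x ∈ p.support) (hy : y ∈ p.support) : (G.deleteEdges {e}).Reachable x y := by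
  classical
  let q := p.toDeleteEdges {e} (by rintro _ h rfl; exact he h)
  have hq : q.support = p.support := support_transfer ..
  rw [← hq] at hx hy
  exact (q.takeUntil x hx).reachable.symm.trans (q.takeUntil y hy).reachable

lemma Dominating.exists_reachable_deleteEdges (hdom : p.Dominating) {e : Sym2 V} {x : V}
    (hx : ∀ y, G.Adj x y → s(x, y) ≠ e) :
    ∃ y ∈ p.support, (G.deleteEdges {e}).Reachable x y := by
  rcases hdom x with hxp | ⟨y, hyp, hxy⟩
  · exact ⟨x, hxp, .rfl⟩
  · exact ⟨y, hyp, Adj.reachable (by simpa using ⟨hxy, hx y hxy⟩)⟩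

lemma exists_adj_adj_of_not_dominating (hG : G.Preconnected) (h : ¬ p.Dominating) :
    ∃ z ∈ p.support, ∃ y y', y ∉ p.support ∧ y' ∉ p.support ∧ G.Adj z y ∧ G.Adj y y' := by
  obtain ⟨w, hw⟩ : ∃ w, ¬ (w ∈ p.support ∨ ∃ x ∈ p.support, G.Adj w x) := by
    simpa [Dominating] using h
  obtain ⟨d, -, hd, hd'⟩ := (hG w u).some.exists_boundary_dart
    {a | ¬ (a ∈ p.support ∨ ∃ x ∈ p.support, G.Adj a x)} hw (by simp)
  simp only [Set.mem_ofPred_eq, not_not] at hd'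
  simp only [Set.mem_ofPred_eq, not_or, not_exists, not_and] at hd
  rcases hd' with hp | ⟨z, hz, hz'⟩
  · exact absurd d.adj (hd.2 _ hp)
  · exact ⟨z, hz, d.snd, d.fst, fun hp => hd.2 _ hp d.adj, hd.1, hz'.symm, d.adj.symm⟩

lemma IsPath.two_le_and_add_two_le_length (hp : p.IsPath)
    (hmax : ∀ (a b : V) (q : G.Walk a b), q.IsPath → q.length ≤ p.length) {i : ℕ} {y y' : V}
    (hi : i ≤ p.length) (hy : y ∉ p.support) (hy' : y' ∉ p.support)
    (hzy : G.Adj (p.getVert i) y) (hyy' : G.Adj y y') : 2 ≤ i ∧ i + 2 ≤ p.length := by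
  have htake : ∀ {a}, a ∉ p.support → a ∉ (p.take i).reverse.support := fun ha h =>
    ha (List.take_subset _ _ (by simpa [support_take] using h))
  have hdrop : ∀ {a}, a ∉ p.support → a ∉ (p.drop i).support := fun ha h =>
    ha (List.drop_subset _ _ (by simpa using h))
  have hback := hmax _ _ (cons hyy'.symm (cons hzy.symm (p.take i).reverse)) <| by
    simp only [cons_isPath_iff, support_cons, List.mem_cons, not_or]
    exact ⟨⟨(hp.take i).reverse, htake hy⟩, hyy'.ne', htake hy'⟩
  have hfwd := hmax _ _ (cons hyy'.symm (cons hzy.symm (p.drop i))) <| by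
    simp only [cons_isPath_iff, support_cons, List.mem_cons, not_or]
    exact ⟨⟨hp.drop i, hdrop hy⟩, hyy'.ne', hdrop hy'⟩
  simp only [length_cons, length_reverse, take_length, drop_length] at hback hfwd
  omega

lemma IsPath.containsSubdividedClaw (hp : p.IsPath) {i : ℕ} {y y' : V}
    (hi : 2 ≤ i) (hi' : i + 2 ≤ p.length) (hy : y ∉ p.support) (hy' : y' ∉ p.support)
    (hzy : G.Adj (p.getVert i) y) (hyy' : G.Adj y y') : G.ContainsSubdividedClaw := by
  obtain ⟨k, rfl⟩ : ∃ k, i = k + 2 := ⟨i - 2, by omega⟩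
  have hg : ∀ a b, a ≤ p.length → b ≤ p.length → (p.getVert a = p.getVert b ↔ a = b) :=
    fun a b ha hb => hp.getVert_injOn.eq_iff ha hb
  have hgy : ∀ a, p.getVert a ≠ y := fun a h => hy (h ▸ p.getVert_mem_support a)
  have hgy' : ∀ a, p.getVert a ≠ y' := fun a h => hy' (h ▸ p.getVert_mem_support a)
  refine ⟨p.getVert (k + 2), p.getVert (k + 1), p.getVert (k + 3), y, p.getVert k,
    p.getVert (k + 4), y', ?_, (p.adj_getVert_succ (by omega)).symm,
    p.adj_getVert_succ (by omega), hzy, (p.adj_getVert_succ (by omega)).symm,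
    p.adj_getVert_succ (by omega), hyy'⟩
  simp (disch := omega) [hg, hgy, hgy', (hgy _).symm, hyy'.ne]

end Walk

open Walk

lemma IsAcyclic.mem_edges_of_dominating (hG : G.IsAcyclic) (hdom : p.Dominating)
    {c w x w' x' : V} (hcw : G.Adj c w) (hwx : G.Adj w x) (hcw' : G.Adj c w')
    (hw'x' : G.Adj w' x') (hxc : x ≠ c) (hw'w : w' ≠ w) (hx'c : x' ≠ c) (hx'w : x' ≠ w) :
    s(c, w) ∈ p.edges := by
  by_contra he
  let H := G.deleteEdges {s(c, w)}
  have hH : ∀ {a b : V}, G.Adj a b → s(a, b) ≠ s(c, w) → H.Reachable a b :=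
    fun hab hne => Adj.reachable (by
      simp only [H, deleteEdges_adj, Set.mem_singleton_iff]; exact ⟨hab, hne⟩)
  obtain ⟨y, hy, hxy⟩ := hdom.exists_reachable_deleteEdges (e := s(c, w)) (x := x) <| by
    rintro y _ h
    simp [hxc, hwx.ne'] at h
  obtain ⟨y', hy', hx'y'⟩ := hdom.exists_reachable_deleteEdges (e := s(c, w)) (x := x') <| by
    rintro y _ h
    simp [hx'c, hx'w] at h
  have hwc : H.Reachable w c :=
    (hH hwx (by simp [hxc, hcw.ne'])).trans <| hxy.trans <|
      (reachable_deleteEdges_of_mem_support he hy hy').trans <| hx'y'.symm.trans <|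
      (hH hw'x'.symm (by simp [hx'c, hx'w])).trans (hH hcw'.symm (by simp [hw'w, hcw'.ne']))
  exact isAcyclic_iff_forall_adj_isBridge.mp hG hcw hwc.symm

lemma IsAcyclic.not_containsSubdividedClaw_of_dominating (hG : G.IsAcyclic) (hp : p.IsPath)
    (hdom : p.Dominating) : ¬ G.ContainsSubdividedClaw := by
  rintro ⟨c, w₁, w₂, w₃, x₁, x₂, x₃, hnd, hc₁, hc₂, hc₃, h₁, h₂, h₃⟩
  simp only [List.nodup_cons, List.mem_cons, List.not_mem_nil, or_false, not_or,
    List.nodup_nil, and_true] at hnd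
  rcases hp.incident_edges_not_all_mem (c := c) (w₁ := w₁) (w₂ := w₂) (w₃ := w₃)
    (by tauto) (by tauto) (by tauto) with h | h | h
  · exact h (hG.mem_edges_of_dominating hdom hc₁ h₁ hc₂ h₂
      (by tauto) (by tauto) (by tauto) (by tauto))
  · exact h (hG.mem_edges_of_dominating hdom hc₂ h₂ hc₁ h₁
      (by tauto) (by tauto) (by tauto) (by tauto))
  · exact h (hG.mem_edges_of_dominating hdom hc₃ h₃ hc₁ h₁
      (by tauto) (by tauto) (by tauto) (by tauto))

lemma Connected.exists_dominating_path [Finite V] (hG : G.Connected)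
    (h : ¬ G.ContainsSubdividedClaw) :
    ∃ (u v : V) (p : G.Walk u v), p.IsPath ∧ p.Dominating := by
  have := hG.nonempty
  obtain ⟨u, v, p, hp, hmax⟩ := exists_isPath_forall_isPath_length_le_length G
  refine ⟨u, v, p, hp, fun w => ?_⟩
  by_contra hw
  obtain ⟨z, hz, y, y', hy, hy', hzy, hyy'⟩ :=
    p.exists_adj_adj_of_not_dominating hG.preconnected fun hdom => hw (hdom w)
  obtain ⟨i, rfl, hi⟩ := mem_support_iff_exists_getVert.mp hz
  obtain ⟨h₂, h₂'⟩ := hp.two_le_and_add_two_le_length hmax hi hy hy' hzy hyy'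
  exact h (hp.containsSubdividedClaw h₂ h₂' hy hy' hzy hyy')

end SimpleGraph

/-- A finite tree is a caterpillar (there is a path within distance 1 of every vertex,
equivalently removing all leaves yields a path) if and only if it contains no copy of
the spider `S(2,2,2)` — the tree obtained from `K_{1,3}` by subdividing each edge
once — as a subgraph. -/
theorem stmt11 {V : Type*} [Fintype V] (G : SimpleGraph V) (hT : G.IsTree) :
    (∃ (u v : V) (p : G.Walk u v), p.IsPath ∧
        ∀ w : V, w ∈ p.support ∨ ∃ x ∈ p.support, G.Adj w x) ↔
      ¬ ∃ c w₁ w₂ w₃ x₁ x₂ x₃ : V,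
          ([c, w₁, w₂, w₃, x₁, x₂, x₃] : List V).Nodup ∧
          G.Adj c w₁ ∧ G.Adj c w₂ ∧ G.Adj c w₃ ∧
          G.Adj w₁ x₁ ∧ G.Adj w₂ x₂ ∧ G.Adj w₃ x₃ :=
  ⟨fun ⟨_, _, _, hp, hdom⟩ => hT.isAcyclic.not_containsSubdividedClaw_of_dominating hp hdom,
    hT.connected.exists_dominating_path⟩
end

section
/- Let n points lie in convex position identified with ℤ/nℤ in cyclic order, with n = 2^d for some d ≥ 3. Suppose a set M of pairwise noncrossing, pairwise vertex-disjoint chords contains three chords of cyclic length 2^(d−2) (= 2^(d−1) − 2^(d−2)). Then every other chord in M has cyclic length at most 2^(d−1) − 3. -/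
/-- Value of a difference in `ZMod n`. -/
lemma zsub_val {n : ℕ} [NeZero n] (x y : ZMod n) :
    (x - y).val = if y.val ≤ x.val then x.val - y.val else n - y.val + x.val := by
  have hx := ZMod.val_lt x
  have hy := ZMod.val_lt y
  have hn : 0 < n := NeZero.pos n
  have h : ((x.val + (n - y.val) : ℕ) : ZMod n) = x - y := by
    push_cast [Nat.cast_sub hy.le]
    simp [sub_eq_add_neg]
  rw [← h, ZMod.val_natCast]
  split_ifs with hle
  · rw [show x.val + (n - y.val) = n + (x.val - y.val) by omega, Nat.add_mod_left,
      Nat.mod_eq_of_lt (by omega)]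
  · rw [Nat.mod_eq_of_lt (by omega)]
    omega

/-- `(b - a).val` in terms of the positions of `a` and `b` relative to a base point `v`,
stated as an `omega`-friendly disjunction. -/
lemma psub {n : ℕ} [NeZero n] (v a b : ZMod n) :
    ((a - v).val ≤ (b - v).val ∧ (b - a).val = (b - v).val - (a - v).val) ∨
    ((b - v).val < (a - v).val ∧ (b - a).val = n - (a - v).val + (b - v).val) := by
  have h : b - a = (b - v) - (a - v) := by ring
  rw [h, zsub_val (b - v) (a - v)]
  split_ifs with hle
  · exact Or.inl ⟨hle, rfl⟩
  · exact Or.inr ⟨lt_of_not_ge hle, rfl⟩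

/-- Positions relative to a base point are injective. -/
lemma pinj {n : ℕ} [NeZero n] {v a b : ZMod n} (h : (a - v).val = (b - v).val) : a = b := by
  have h2 : a - v = b - v := ZMod.val_injective n h
  have := sub_left_injective (G := ZMod n) (b := v) h2
  exact this

lemma ppos {n : ℕ} [NeZero n] {v a : ZMod n} (h : a ≠ v) : 0 < (a - v).val := by
  rcases Nat.eq_zero_or_pos (a - v).val with h0 | h0
  · exact absurd (sub_eq_zero.mp ((ZMod.val_eq_zero _).mp h0)) h
  · exact h0

/-- If the positions of the endpoints of two chords interleave, the chords cross. -/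
lemma crossing_of_interleave {n : ℕ} [NeZero n] (v a b c d : ZMod n)
    (hab : a ≠ b) (hcd : c ≠ d) (hac : a ≠ c) (had : a ≠ d) (hbc : b ≠ c) (hbd : b ≠ d)
    (h1 : min (a - v).val (b - v).val < min (c - v).val (d - v).val)
    (h2 : min (c - v).val (d - v).val < max (a - v).val (b - v).val)
    (h3 : max (a - v).val (b - v).val < max (c - v).val (d - v).val) :
    Crossing n (a, b) (c, d) := by
  refine ⟨hab, hcd, hac, had, hbc, hbd, ?_⟩
  have e1 := psub v a b
  have e2 := psub v a c
  have e3 := psub v a d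
  have la := ZMod.val_lt (a - v)
  have lb := ZMod.val_lt (b - v)
  have lc := ZMod.val_lt (c - v)
  have ld := ZMod.val_lt (d - v)
  have dab : (a - v).val ≠ (b - v).val := fun h => hab (pinj h)
  have dac : (a - v).val ≠ (c - v).val := fun h => hac (pinj h)
  have dad : (a - v).val ≠ (d - v).val := fun h => had (pinj h)
  have dbc : (b - v).val ≠ (c - v).val := fun h => hbc (pinj h)
  have dbd : (b - v).val ≠ (d - v).val := fun h => hbd (pinj h)
  have dcd : (c - v).val ≠ (d - v).val := fun h => hcd (pinj h)
  simp only [inArc]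
  omega

/-- A chord not crossing and disjoint from `(v,w)` has both endpoints on the same side. -/
lemma same_side {n : ℕ} (v w : ZMod n) (e : ZMod n × ZMod n)
    (h : ¬ Crossing n (v, w) e) (hvw : v ≠ w) (he : e.1 ≠ e.2)
    (h1 : v ≠ e.1) (h2 : v ≠ e.2) (h3 : w ≠ e.1) (h4 : w ≠ e.2) :
    (inArc n v w e.1 ↔ inArc n v w e.2) := by
  have hx : ¬ (inArc n v w e.1 ↔ ¬ inArc n v w e.2) :=
    fun hiff => h ⟨hvw, he, h1, h2, h3, h4, hiff⟩
  tauto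

lemma ne_of_cycLen {n : ℕ} {e : ZMod n × ZMod n} {L : ℕ} (hL : 0 < L)
    (h : cycLen n e = L) : e.1 ≠ e.2 := by
  intro hEq
  rw [cycLen, hEq] at h
  simp at h
  omega

/-- Key lemma: if two vertex-disjoint noncrossing chords of cyclic length `2^(d-2)` lie
entirely within the open interval of positions `(0, t)` relative to `v`, then
`t ≥ 2^(d-1) + 3`. -/
lemma key (d : ℕ) (hd : 3 ≤ d) (v : ZMod (2 ^ d)) (t : ℕ)
    (E F : ZMod (2 ^ d) × ZMod (2 ^ d))
    (hE : cycLen (2 ^ d) E = 2 ^ (d - 2)) (hF : cycLen (2 ^ d) F = 2 ^ (d - 2))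
    (hd1 : E.1 ≠ F.1) (hd2 : E.1 ≠ F.2) (hd3 : E.2 ≠ F.1) (hd4 : E.2 ≠ F.2)
    (hc1 : ¬ Crossing (2 ^ d) E F) (hc2 : ¬ Crossing (2 ^ d) F E)
    (hE1 : 0 < (E.1 - v).val) (hE1' : (E.1 - v).val < t)
    (hE2 : 0 < (E.2 - v).val) (hE2' : (E.2 - v).val < t)
    (hF1 : 0 < (F.1 - v).val) (hF1' : (F.1 - v).val < t)
    (hF2 : 0 < (F.2 - v).val) (hF2' : (F.2 - v).val < t) :
    2 ^ (d - 1) + 3 ≤ t := by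
  have hn4 : (2 : ℕ) ^ d = 4 * 2 ^ (d - 2) := by
    have h : d - 2 + 2 = d := by omega
    calc (2 : ℕ) ^ d = 2 ^ (d - 2 + 2) := by rw [h]
      _ = 4 * 2 ^ (d - 2) := by rw [pow_add]; ring
  have h2L : (2 : ℕ) ^ (d - 1) = 2 * 2 ^ (d - 2) := by
    have h : d - 2 + 1 = d - 1 := by omega
    rw [← h, pow_succ]; ring
  have hL2 : 2 ≤ (2 : ℕ) ^ (d - 2) :=
    le_trans (by norm_num) (Nat.pow_le_pow_right (by norm_num) (by omega : 1 ≤ d - 2))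
  have hab : E.1 ≠ E.2 := ne_of_cycLen (by positivity) hE
  have hcd : F.1 ≠ F.2 := ne_of_cycLen (by positivity) hF
  simp only [cycLen] at hE hF
  have s1 := psub v E.1 E.2
  have s1' := psub v E.2 E.1
  have s2 := psub v F.1 F.2
  have s2' := psub v F.2 F.1
  have dab : (E.1 - v).val ≠ (E.2 - v).val := fun h => hab (pinj h)
  have dcd : (F.1 - v).val ≠ (F.2 - v).val := fun h => hcd (pinj h)
  have dac : (E.1 - v).val ≠ (F.1 - v).val := fun h => hd1 (pinj h)
  have dad : (E.1 - v).val ≠ (F.2 - v).val := fun h => hd2 (pinj h)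
  have dbc : (E.2 - v).val ≠ (F.1 - v).val := fun h => hd3 (pinj h)
  have dbd : (E.2 - v).val ≠ (F.2 - v).val := fun h => hd4 (pinj h)
  have ni1 : ¬ (min (E.1 - v).val (E.2 - v).val < min (F.1 - v).val (F.2 - v).val ∧
      min (F.1 - v).val (F.2 - v).val < max (E.1 - v).val (E.2 - v).val ∧
      max (E.1 - v).val (E.2 - v).val < max (F.1 - v).val (F.2 - v).val) := by
    rintro ⟨x, y, z⟩
    exact hc1 (by
      have := crossing_of_interleave v E.1 E.2 F.1 F.2 hab hcd hd1 hd2 hd3 hd4 x y z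
      simpa using this)
  have ni2 : ¬ (min (F.1 - v).val (F.2 - v).val < min (E.1 - v).val (E.2 - v).val ∧
      min (E.1 - v).val (E.2 - v).val < max (F.1 - v).val (F.2 - v).val ∧
      max (F.1 - v).val (F.2 - v).val < max (E.1 - v).val (E.2 - v).val) := by
    rintro ⟨x, y, z⟩
    exact hc2 (by
      have := crossing_of_interleave v F.1 F.2 E.1 E.2 hcd hab hd1.symm hd3.symm
        hd2.symm hd4.symm x y z
      simpa using this)
  omega

/-- On `2^d` points in convex position (`d ≥ 3`), if a plane matching `M` (pairwise
vertex-disjoint, noncrossing chords) contains three chords of cyclic length `2^(d-2)`,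
then every other chord of `M` has cyclic length at most `2^(d-1) - 3`. -/
theorem stmt13 (d : ℕ) (hd : 3 ≤ d)
    (M : Finset (ZMod (2 ^ d) × ZMod (2 ^ d)))
    (hdisj : ∀ e ∈ M, ∀ f ∈ M, e ≠ f →
      e.1 ≠ f.1 ∧ e.1 ≠ f.2 ∧ e.2 ≠ f.1 ∧ e.2 ≠ f.2)
    (hcross : ∀ e ∈ M, ∀ f ∈ M, e ≠ f → ¬ Crossing (2 ^ d) e f)
    (e₁ e₂ e₃ : ZMod (2 ^ d) × ZMod (2 ^ d))
    (h₁ : e₁ ∈ M) (h₂ : e₂ ∈ M) (h₃ : e₃ ∈ M)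
    (h12 : e₁ ≠ e₂) (h13 : e₁ ≠ e₃) (h23 : e₂ ≠ e₃)
    (hl₁ : cycLen (2 ^ d) e₁ = 2 ^ (d - 2))
    (hl₂ : cycLen (2 ^ d) e₂ = 2 ^ (d - 2))
    (hl₃ : cycLen (2 ^ d) e₃ = 2 ^ (d - 2)) :
    ∀ f ∈ M, f ≠ e₁ → f ≠ e₂ → f ≠ e₃ →
      cycLen (2 ^ d) f ≤ 2 ^ (d - 1) - 3 := by
  intro f hf hf1 hf2 hf3
  have hn4 : (2 : ℕ) ^ d = 4 * 2 ^ (d - 2) := by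
    have h : d - 2 + 2 = d := by omega
    calc (2 : ℕ) ^ d = 2 ^ (d - 2 + 2) := by rw [h]
      _ = 4 * 2 ^ (d - 2) := by rw [pow_add]; ring
  have h2L : (2 : ℕ) ^ (d - 1) = 2 * 2 ^ (d - 2) := by
    have h : d - 2 + 1 = d - 1 := by omega
    rw [← h, pow_succ]; ring
  have hL2 : 2 ≤ (2 : ℕ) ^ (d - 2) :=
    le_trans (by norm_num) (Nat.pow_le_pow_right (by norm_num) (by omega : 1 ≤ d - 2))
  by_cases hvw : f.1 = f.2
  · simp [cycLen, hvw]
  -- t is the position of f.2 relative to f.1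
  set t := (f.2 - f.1).val with ht
  have htlt : t < 2 ^ d := ZMod.val_lt _
  have htpos : 0 < t := ppos (Ne.symm hvw)
  -- the complementary side length
  have ht' : (f.1 - f.2).val = 2 ^ d - t := by
    rw [show f.1 - f.2 = -(f.2 - f.1) by ring, ZMod.neg_val,
      if_neg (sub_ne_zero.mpr (Ne.symm hvw))]
  -- the main closing argument, given two of the three chords on the same side
  have conclude : ∀ (E F : ZMod (2 ^ d) × ZMod (2 ^ d)), E ∈ M → F ∈ M → E ≠ F →
      E ≠ f → F ≠ f →
      cycLen (2 ^ d) E = 2 ^ (d - 2) → cycLen (2 ^ d) F = 2 ^ (d - 2) →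
      (((E.1 - f.1).val < t ∧ (E.2 - f.1).val < t ∧
        (F.1 - f.1).val < t ∧ (F.2 - f.1).val < t) ∨
       (t < (E.1 - f.1).val ∧ t < (E.2 - f.1).val ∧
        t < (F.1 - f.1).val ∧ t < (F.2 - f.1).val)) →
      cycLen (2 ^ d) f ≤ 2 ^ (d - 1) - 3 := by
    intro E F hEM hFM hEF hEf hFf hcE hcF hside
    obtain ⟨g1, g2, g3, g4⟩ := hdisj E hEM F hFM hEF
    have hcr1 := hcross E hEM F hFM hEF
    have hcr2 := hcross F hFM E hEM (Ne.symm hEF)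
    obtain ⟨q1, q2, q3, q4⟩ := hdisj E hEM f hf hEf
    obtain ⟨r1, r2, r3, r4⟩ := hdisj F hFM f hf hFf
    rcases hside with ⟨u1, u2, u3, u4⟩ | ⟨u1, u2, u3, u4⟩
    · have hkey := key d hd f.1 t E F hcE hcF g1 g2 g3 g4 hcr1 hcr2
        (ppos q1) u1 (ppos q3) u2 (ppos r1) u3 (ppos r3) u4
      simp only [cycLen, ← ht, ht']
      omega
    · -- both chords on the other side: use positions relative to f.2
      have relw : ∀ x : ZMod (2 ^ d), t < (x - f.1).val →
          0 < (x - f.2).val ∧ (x - f.2).val < 2 ^ d - t := by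
        intro x hx
        have h := psub f.1 f.2 x
        rw [← ht] at h
        have h1 := ZMod.val_lt (x - f.1)
        omega
      obtain ⟨w1, w1'⟩ := relw E.1 u1
      obtain ⟨w2, w2'⟩ := relw E.2 u2
      obtain ⟨w3, w3'⟩ := relw F.1 u3
      obtain ⟨w4, w4'⟩ := relw F.2 u4
      have hkey := key d hd f.2 (2 ^ d - t) E F hcE hcF g1 g2 g3 g4 hcr1 hcr2
        w1 w1' w2 w2' w3 w3' w4 w4'
      simp only [cycLen, ← ht, ht']
      omega
  -- each chord lies entirely on one side of f
  have side : ∀ e : ZMod (2 ^ d) × ZMod (2 ^ d), e ∈ M → f ≠ e →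
      cycLen (2 ^ d) e = 2 ^ (d - 2) →
      (((e.1 - f.1).val < t ∧ (e.2 - f.1).val < t) ∨
       (t < (e.1 - f.1).val ∧ t < (e.2 - f.1).val)) := by
    intro e heM hfe hce
    obtain ⟨p1, p2, p3, p4⟩ := hdisj f hf e heM hfe
    have hne : e.1 ≠ e.2 := ne_of_cycLen (by positivity) hce
    have hC : ¬ Crossing (2 ^ d) (f.1, f.2) e := by
      rw [Prod.mk.eta]; exact hcross f hf e heM hfe
    have hiff := same_side f.1 f.2 e hC hvw hne p1 p2 p3 p4
    simp only [inArc, ← ht] at hiff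
    have z1 : 0 < (e.1 - f.1).val := ppos (Ne.symm p1)
    have z2 : 0 < (e.2 - f.1).val := ppos (Ne.symm p2)
    have z3 : (e.1 - f.1).val ≠ t := fun h => p3 (pinj h).symm
    have z4 : (e.2 - f.1).val ≠ t := fun h => p4 (pinj h).symm
    omega
  have s1 := side e₁ h₁ hf1 hl₁
  have s2 := side e₂ h₂ hf2 hl₂
  have s3 := side e₃ h₃ hf3 hl₃
  rcases s1 with ⟨a1, a2⟩ | ⟨a1, a2⟩ <;> rcases s2 with ⟨b1, b2⟩ | ⟨b1, b2⟩ <;>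
    rcases s3 with ⟨c1, c2⟩ | ⟨c1, c2⟩
  · exact conclude e₁ e₂ h₁ h₂ h12 hf1.symm hf2.symm hl₁ hl₂ (Or.inl ⟨a1, a2, b1, b2⟩)
  · exact conclude e₁ e₂ h₁ h₂ h12 hf1.symm hf2.symm hl₁ hl₂ (Or.inl ⟨a1, a2, b1, b2⟩)
  · exact conclude e₁ e₃ h₁ h₃ h13 hf1.symm hf3.symm hl₁ hl₃ (Or.inl ⟨a1, a2, c1, c2⟩)
  · exact conclude e₂ e₃ h₂ h₃ h23 hf2.symm hf3.symm hl₂ hl₃ (Or.inr ⟨b1, b2, c1, c2⟩)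
  · exact conclude e₂ e₃ h₂ h₃ h23 hf2.symm hf3.symm hl₂ hl₃ (Or.inl ⟨b1, b2, c1, c2⟩)
  · exact conclude e₁ e₃ h₁ h₃ h13 hf1.symm hf3.symm hl₁ hl₃ (Or.inr ⟨a1, a2, c1, c2⟩)
  · exact conclude e₁ e₂ h₁ h₂ h12 hf1.symm hf2.symm hl₁ hl₂ (Or.inr ⟨a1, a2, b1, b2⟩)
  · exact conclude e₁ e₂ h₁ h₂ h12 hf1.symm hf2.symm hl₁ hl₂ (Or.inr ⟨a1, a2, b1, b2⟩)
end

section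
/- For every natural number k ≥ 1, every graph G on n vertices with more than k·n edges contains a path with at least 2k+1 edges. -/
/-!
Write `e(s) = #(G.interedges s s)` (twice the number of edges inside `s`) and induct on `s`
while keeping `s` dense, i.e. `2k·|s| < e(s)`. A vertex with at most `k` neighbours in `s` can
be deleted. Otherwise every vertex has at least `k + 1` neighbours in `s`. If a longest path `P`
in `s` has at most `2k + 1` vertices, Dirac's rotation argument closes `P` into a cycle, so by
maximality no edge leaves `V(P)`. Since `e(V(P)) ≤ |P|(|P| - 1) ≤ 2k·|P|`, the smaller set
`s \ V(P)` is still dense.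
-/

open Finset

namespace List

variable {α : Type*}

theorem IsChain.append_comm_of_rel_getLast_head {R : α → α → Prop} {l₁ l₂ : List α}
    (h : (l₁ ++ l₂).IsChain R) (hcyc : ∀ x ∈ (l₁ ++ l₂).getLast?, ∀ y ∈ (l₁ ++ l₂).head?, R x y) :
    (l₂ ++ l₁).IsChain R := by
  obtain ⟨h₁, h₂, -⟩ := isChain_append.1 h
  refine h₂.append h₁ fun x hx y hy => hcyc x ?_ y ?_
  · simp [getLast?_append, Option.mem_def.1 hx]
  · simp [head?_append, Option.mem_def.1 hy]

/-- Pigeonhole over the `l.tail.length` pairs of consecutive entries of `l`. -/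
theorem exists_eq_append_cons_cons_of_length_lt {p q : α → Prop} [DecidablePred p]
    [DecidablePred q] :
    ∀ {l : List α}, l.tail.length < l.dropLast.countP q + l.tail.countP p →
      ∃ l₁ x y l₂, l = l₁ ++ x :: y :: l₂ ∧ q x ∧ p y
  | [] => by simp
  | [_] => by simp
  | x :: y :: l => by
    intro h
    by_cases hxy : q x ∧ p y
    · exact ⟨[], x, y, l, rfl, hxy⟩
    · obtain ⟨l₁, a, b, l₂, hl, hab⟩ :=
        exists_eq_append_cons_cons_of_length_lt (p := p) (q := q) (l := y :: l)
          (by simp only [dropLast_cons_cons, countP_cons, tail_cons, length_cons] at h ⊢; grind)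
      exact ⟨x :: l₁, a, b, l₂, by rw [hl, cons_append], hab⟩

theorem Nodup.card_le_countP {p : α → Prop} [DecidablePred p] {l : List α} (hl : l.Nodup)
    {t : Finset α} (ht : ∀ x ∈ t, x ∈ l ∧ p x) : #t ≤ l.countP p := by
  classical
  rw [countP_eq_length_filter, ← toFinset_card_of_nodup (hl.filter _)]
  exact card_le_card fun x hx => by simpa using ht x hx

end List

namespace SimpleGraph

variable {V : Type*} {G : SimpleGraph V}

section Interedges

variable [DecidableRel G.Adj]

theorem card_interedges_eq_sum (s t : Finset V) :
    #(G.interedges s t) = ∑ x ∈ s, #{y ∈ t | G.Adj x y} := by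
  simp only [interedges_def, card_filter, sum_product]

theorem card_interedges_comm (s t : Finset V) : #(G.interedges s t) = #(G.interedges t s) :=
  have := G.symm
  Rel.card_interedges_comm s t

theorem card_interedges_univ [Fintype V] : #(G.interedges univ univ) = 2 * #G.edgeFinset := by
  simp only [card_interedges_eq_sum, ← neighborFinset_eq_filter, card_neighborFinset_eq_degree,
    sum_degrees_eq_twice_card_edges]

variable [DecidableEq V]

theorem card_interedges_union {t u : Finset V} (h : Disjoint t u) :
    #(G.interedges (t ∪ u) (t ∪ u)) =
      #(G.interedges t t) + #(G.interedges u u) + 2 * #(G.interedges t u) := by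
  have hsplit (x : V) :
      #{y ∈ t ∪ u | G.Adj x y} = #{y ∈ t | G.Adj x y} + #{y ∈ u | G.Adj x y} := by
    rw [filter_union, card_union_of_disjoint (disjoint_filter_filter h)]
  have hcomm := card_interedges_comm (G := G) u t
  simp only [card_interedges_eq_sum] at hcomm ⊢
  rw [sum_union h]
  simp only [hsplit, sum_add_distrib]
  omega

theorem card_interedges_self_le (s : Finset V) : #(G.interedges s s) ≤ #s * (#s - 1) := by
  rw [card_interedges_eq_sum, ← smul_eq_mul]
  refine sum_le_card_nsmul s _ _ fun x hx => ?_
  rw [← card_erase_of_mem hx]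
  exact card_le_card fun y hy => by
    simp only [mem_filter] at hy
    exact mem_erase.2 ⟨(G.ne_of_adj hy.2).symm, hy.1⟩

theorem card_interedges_le_erase_add {s : Finset V} {v : V} (hv : v ∈ s) :
    #(G.interedges s s) ≤
      #(G.interedges (s.erase v) (s.erase v)) + 2 * #{w ∈ s | G.Adj v w} := by
  have hsingle : #(G.interedges {v} {v}) = 0 := by
    simpa using card_interedges_self_le (G := G) {v}
  have hcross : #(G.interedges {v} (s.erase v)) ≤ #{w ∈ s | G.Adj v w} := by
    rw [card_interedges_eq_sum, sum_singleton]
    exact card_le_card (filter_subset_filter _ (erase_subset v s))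
  conv_lhs => rw [← insert_erase hv, insert_eq,
    card_interedges_union (disjoint_singleton_left.2 (notMem_erase v s))]
  omega

theorem card_interedges_eq_add_sdiff {s t : Finset V} (hts : t ⊆ s)
    (hclosed : ∀ x ∈ t, ∀ y ∈ s, G.Adj x y → y ∈ t) :
    #(G.interedges s s) = #(G.interedges t t) + #(G.interedges (s \ t) (s \ t)) := by
  have hcross : G.interedges t (s \ t) = ∅ := by
    ext ⟨x, y⟩
    simp only [mem_interedges_iff, mem_sdiff, notMem_empty, iff_false]
    exact fun ⟨hx, ⟨hy, hyt⟩, hxy⟩ => hyt (hclosed x hx y hy hxy)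
  conv_lhs => rw [← union_sdiff_of_subset hts, card_interedges_union disjoint_sdiff, hcross,
    card_empty, mul_zero, add_zero]

end Interedges

/-- `l` is the vertex list of a path of `G` inside `s`, so the path has `l.length - 1` edges. -/
structure IsPathIn (G : SimpleGraph V) (s : Finset V) (l : List V) : Prop where
  isChain : l.IsChain G.Adj
  nodup : l.Nodup
  mem : ∀ x ∈ l, x ∈ s

structure IsLongestPathIn (G : SimpleGraph V) (s : Finset V) (l : List V) : Prop where
  isPathIn : G.IsPathIn s l
  length_le : ∀ l', G.IsPathIn s l' → l'.length ≤ l.length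

variable {s t : Finset V} {l : List V}

namespace IsPathIn

theorem length_le_card (hl : G.IsPathIn s l) : l.length ≤ #s := by
  classical
  rw [← List.toFinset_card_of_nodup hl.nodup]
  exact card_le_card fun x hx => hl.mem x (List.mem_toFinset.1 hx)

theorem mono (hl : G.IsPathIn s l) (hst : s ⊆ t) : G.IsPathIn t l :=
  ⟨hl.isChain, hl.nodup, fun x hx => hst (hl.mem x hx)⟩

theorem reverse (hl : G.IsPathIn s l) : G.IsPathIn s l.reverse :=
  ⟨List.isChain_reverse.2 (hl.isChain.imp fun _ _ h => h.symm), List.nodup_reverse.2 hl.nodup,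
    fun x hx => hl.mem x (List.mem_reverse.1 hx)⟩

theorem cons (hl : G.IsPathIn s l) {w : V} (hw : w ∈ s) (hwl : w ∉ l)
    (hadj : ∀ y ∈ l.head?, G.Adj w y) : G.IsPathIn s (w :: l) :=
  ⟨hl.isChain.cons hadj, List.nodup_cons.2 ⟨hwl, hl.nodup⟩, List.forall_mem_cons.2 ⟨hw, hl.mem⟩⟩

theorem of_perm {l' : List V} (hl : G.IsPathIn s l) (hperm : l'.Perm l)
    (hchain : l'.IsChain G.Adj) : G.IsPathIn s l' :=
  ⟨hchain, hperm.nodup_iff.2 hl.nodup, fun x hx => hl.mem x (hperm.subset hx)⟩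

end IsPathIn

theorem exists_isLongestPathIn (G : SimpleGraph V) (s : Finset V) :
    ∃ l, G.IsLongestPathIn s l := by
  by_contra! h
  have hlong (n : ℕ) : ∃ l, G.IsPathIn s l ∧ n ≤ l.length := by
    induction n with
    | zero => exact ⟨[], ⟨List.isChain_nil, List.nodup_nil, by simp⟩, le_rfl⟩
    | succ n ih =>
      obtain ⟨l, hl, hn⟩ := ih
      obtain ⟨l', hl', hlen⟩ := not_forall₂.1 fun h' => h l ⟨hl, h'⟩
      exact ⟨l', hl', by omega⟩
  obtain ⟨l, hl, hlen⟩ := hlong (#s + 1)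
  exact absurd hl.length_le_card (by omega)

namespace IsLongestPathIn

theorem reverse (hl : G.IsLongestPathIn s l) : G.IsLongestPathIn s l.reverse :=
  ⟨hl.isPathIn.reverse, fun l' hl' => (hl.length_le l' hl').trans_eq l.length_reverse.symm⟩

theorem ne_nil (hl : G.IsLongestPathIn s l) (hs : s.Nonempty) : l ≠ [] := by
  rintro rfl
  obtain ⟨v, hv⟩ := hs
  have := hl.length_le [v] ⟨List.isChain_singleton v, List.nodup_singleton v, by simpa using hv⟩
  simp at this

theorem mem_of_adj_head {a w : V} (hl : G.IsLongestPathIn s (a :: l)) (hw : w ∈ s)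
    (haw : G.Adj a w) : w ∈ l := by
  by_contra hwl
  have hwal : w ∉ a :: l := List.not_mem_cons_of_ne_of_not_mem (G.ne_of_adj haw).symm hwl
  have := hl.length_le _ (hl.isPathIn.cons hw hwal (by simpa using haw.symm))
  simp at this

theorem mem_of_adj_getLast {b w : V} (hl : G.IsLongestPathIn s (l ++ [b])) (hw : w ∈ s)
    (hbw : G.Adj b w) : w ∈ l :=
  List.mem_reverse.1 (mem_of_adj_head (by simpa using hl.reverse) hw hbw)

/-- Rotating the cycle to start at `z` and prepending `w` would give a longer path. -/
theorem mem_of_adj_of_cyclic (hl : G.IsLongestPathIn s l)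
    (hcyc : ∀ x ∈ l.getLast?, ∀ y ∈ l.head?, G.Adj x y) {z w : V} (hz : z ∈ l) (hw : w ∈ s)
    (hzw : G.Adj z w) : w ∈ l := by
  by_contra hwl
  obtain ⟨l₁, l₂, rfl⟩ := List.append_of_mem hz
  have hrot : G.IsPathIn s ((z :: l₂) ++ l₁) :=
    hl.isPathIn.of_perm List.perm_append_comm
      (hl.isPathIn.isChain.append_comm_of_rel_getLast_head hcyc)
  have := hl.length_le _ (hrot.cons hw (fun h => hwl (List.perm_append_comm.subset h))
    (by simpa using hzw.symm))
  simp at this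
  omega

/-- Dirac: all neighbours of the ends `a` and `b` lie on the path, and since it has fewer than
`2δ` edges, some edge `xy` of it has `x ~ b` and `a ~ y`; then `a … x b … y` closes up. -/
theorem exists_cyclic_perm [DecidableRel G.Adj] {δ : ℕ} (hl : G.IsLongestPathIn s l)
    (hne : l ≠ []) (hdeg : ∀ v ∈ s, δ ≤ #{w ∈ s | G.Adj v w}) (hlen : l.length ≤ 2 * δ) :
    ∃ c : List V, c.Perm l ∧ c.IsChain G.Adj ∧ ∀ x ∈ c.getLast?, ∀ y ∈ c.head?, G.Adj x y := by
  obtain ⟨a, t, rfl⟩ := List.exists_cons_of_ne_nil hne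
  obtain ⟨l', b, hl'⟩ : ∃ l' b, a :: t = l' ++ [b] :=
    ⟨_, _, (List.dropLast_append_getLast hne).symm⟩
  have ha : δ ≤ t.countP (G.Adj a) :=
    (hdeg a (hl.isPathIn.mem a List.mem_cons_self)).trans <|
      (List.nodup_cons.1 hl.isPathIn.nodup).2.card_le_countP fun w hw =>
        have hw := mem_filter.1 hw
        ⟨hl.mem_of_adj_head hw.1 hw.2, hw.2⟩
  have hb : δ ≤ l'.countP (fun x => G.Adj x b) := by
    rw [hl'] at hl
    refine (hdeg b (hl.isPathIn.mem b (by simp))).trans <|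
      (List.nodup_append.1 hl.isPathIn.nodup).1.card_le_countP fun w hw => ?_
    have hw := mem_filter.1 hw
    exact ⟨hl.mem_of_adj_getLast hw.1 hw.2, hw.2.symm⟩
  obtain ⟨l₁, x, y, l₂, hsplit, hxb, hay⟩ :=
    List.exists_eq_append_cons_cons_of_length_lt (l := a :: t) (p := G.Adj a)
      (q := fun x => G.Adj x b) (by
        rw [List.tail_cons, hl', List.dropLast_concat]
        simp only [List.length_cons] at hlen
        omega)
  have hlast : (y :: l₂).getLast? = some b := by
    simpa [List.getLast?_append] using congrArg List.getLast? (hsplit.symm.trans hl')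
  have hhead : (l₁ ++ [x]).head? = some a := by
    simpa [List.head?_append] using (congrArg List.head? hsplit).symm
  have hchain := hsplit ▸ hl.isPathIn.isChain
  rw [List.isChain_append_cons_cons] at hchain
  refine ⟨(l₁ ++ [x]) ++ (y :: l₂).reverse, ?_, ?_, ?_⟩
  · rw [hsplit, List.append_assoc, List.singleton_append]
    exact (List.reverse_perm _).cons x |>.append_left l₁
  · refine hchain.1.append (List.isChain_reverse.2 (hchain.2.2.imp fun _ _ h => h.symm)) ?_
    rw [List.head?_reverse, hlast]
    simpa using hxb
  · rw [List.head?_append, hhead, List.getLast?_append, List.getLast?_reverse]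
    simpa using hay.symm

theorem mem_of_adj [DecidableRel G.Adj] {δ : ℕ} (hl : G.IsLongestPathIn s l)
    (hdeg : ∀ v ∈ s, δ ≤ #{w ∈ s | G.Adj v w}) (hlen : l.length ≤ 2 * δ) {z w : V} (hz : z ∈ l)
    (hw : w ∈ s) (hzw : G.Adj z w) : w ∈ l := by
  obtain ⟨c, hperm, hchain, hcyc⟩ := hl.exists_cyclic_perm (List.ne_nil_of_mem hz) hdeg hlen
  have hc : G.IsLongestPathIn s c :=
    ⟨hl.isPathIn.of_perm hperm hchain,
      fun l' h => (hl.length_le l' h).trans_eq hperm.length_eq.symm⟩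
  exact hperm.subset (hc.mem_of_adj_of_cyclic hcyc (hperm.symm.subset hz) hw hzw)

theorem lt_card_interedges_sdiff [DecidableEq V] [DecidableRel G.Adj] {k : ℕ}
    (hl : G.IsLongestPathIn s l) (hdeg : ∀ v ∈ s, k + 1 ≤ #{w ∈ s | G.Adj v w})
    (hlen : l.length ≤ 2 * k + 1) (hs : 2 * k * #s < #(G.interedges s s)) :
    2 * k * #(s \ l.toFinset) < #(G.interedges (s \ l.toFinset) (s \ l.toFinset)) := by
  set T := l.toFinset
  have hTs : T ⊆ s := fun x hx => hl.isPathIn.mem x (List.mem_toFinset.1 hx)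
  have hclosed : ∀ x ∈ T, ∀ y ∈ s, G.Adj x y → y ∈ T := fun x hx y hy hxy =>
    List.mem_toFinset.2 <| hl.mem_of_adj hdeg (by omega) (List.mem_toFinset.1 hx) hy hxy
  have hsplit := card_interedges_eq_add_sdiff hTs hclosed
  have hT : #T = l.length := List.toFinset_card_of_nodup hl.isPathIn.nodup
  have hTsparse : #(G.interedges T T) ≤ 2 * k * #T :=
    (card_interedges_self_le T).trans <|
      (Nat.mul_le_mul_left _ (by omega : #T - 1 ≤ 2 * k)).trans_eq (mul_comm _ _)
  have hcard : 2 * k * #s = 2 * k * #(s \ T) + 2 * k * #T := by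
    rw [← mul_add, card_sdiff_add_card_eq_card hTs]
  linarith

end IsLongestPathIn

theorem exists_isPathIn_of_card_interedges_gt [DecidableEq V] [DecidableRel G.Adj] (k : ℕ)
    (s : Finset V) (hs : 2 * k * #s < #(G.interedges s s)) :
    ∃ l, G.IsPathIn s l ∧ 2 * k + 2 ≤ l.length := by
  induction s using Finset.strongInduction with | H s ih =>
  by_cases hlow : ∃ v ∈ s, #{w ∈ s | G.Adj v w} ≤ k
  · obtain ⟨v, hv, hdeg⟩ := hlow
    have herase := card_interedges_le_erase_add (G := G) hv
    have hcard : 2 * k * #s = 2 * k * #(s.erase v) + 2 * k := by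
      rw [← card_erase_add_one hv]; ring
    obtain ⟨l, hl, hlen⟩ := ih _ (erase_ssubset hv) (by linarith)
    exact ⟨l, hl.mono (erase_subset v s), hlen⟩
  push Not at hlow
  obtain ⟨l, hl⟩ := G.exists_isLongestPathIn s
  by_cases hlen : 2 * k + 2 ≤ l.length
  · exact ⟨l, hl.isPathIn, hlen⟩
  have hsne : s.Nonempty := nonempty_iff_ne_empty.2 fun h => by simp [h] at hs
  have hT : s \ l.toFinset ⊂ s :=
    sdiff_ssubset (fun x hx => hl.isPathIn.mem x (List.mem_toFinset.1 hx))
      ((List.toFinset_nonempty_iff l).2 (hl.ne_nil hsne))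
  obtain ⟨l', hl', hlen'⟩ := ih _ hT (hl.lt_card_interedges_sdiff hlow (by omega) hs)
  exact ⟨l', hl'.mono hT.subset, hlen'⟩

end SimpleGraph

theorem stmt14_general {V : Type*} [Fintype V] (G : SimpleGraph V) (k : ℕ)
    (hE : k * Fintype.card V < G.edgeSet.ncard) :
    ∃ (u v : V) (p : G.Walk u v), p.IsPath ∧ 2 * k + 1 ≤ p.length := by
  classical
  have hdense : 2 * k * #(univ : Finset V) < #(G.interedges univ univ) := by
    rw [G.card_interedges_univ, card_univ, ← Set.ncard_coe_finset, G.coe_edgeFinset]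
    linarith
  obtain ⟨l, hl, hlen⟩ := G.exists_isPathIn_of_card_interedges_gt k _ hdense
  have hne : l ≠ [] := by rintro rfl; simp at hlen
  refine ⟨_, _, SimpleGraph.Walk.ofSupport l hne hl.isChain, ?_, ?_⟩
  · rw [SimpleGraph.Walk.isPath_def, SimpleGraph.Walk.support_ofSupport]
    exact hl.nodup
  · rw [SimpleGraph.Walk.length_ofSupport]
    omega

/-- Every graph on `n` vertices with more than `k·n` edges (`k ≥ 1`) contains a path
with at least `2k + 1` edges. -/
theorem stmt14 {V : Type*} [Fintype V] (G : SimpleGraph V) (k : ℕ) (hk : 1 ≤ k)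
    (hE : k * Fintype.card V < G.edgeSet.ncard) :
    ∃ (u v : V) (p : G.Walk u v), p.IsPath ∧ 2 * k + 1 ≤ p.length :=
  stmt14_general G k hE
end

section
/- Let d ≥ 2. Every convex-geometric drawing of the hypercube graph Q_d (its 2^d vertices {0,1}^d placed injectively on 2^d points in convex position, edges drawn as straight segments) contains a plane matching with at least ⌊(d−1)/2⌋ edges. -/
/-- The `d`-dimensional hypercube graph on binary strings of length `d`:
two vertices are adjacent iff they differ in exactly one coordinate. -/
def hypercube (d : ℕ) : SimpleGraph (Fin d → Bool) :=
  SimpleGraph.fromRel (fun x y => (Finset.univ.filter (fun i => x i ≠ y i)).card = 1)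

/-- Flip coordinate `i` of a vertex of the hypercube. -/
def bflip {d : ℕ} (x : Fin d → Bool) (i : Fin d) : Fin d → Bool :=
  fun j => if j = i then !(x j) else x j

lemma bflip_bflip {d : ℕ} (x : Fin d → Bool) (i : Fin d) : bflip (bflip x i) i = x := by
  funext j
  by_cases h : j = i <;> simp [bflip, h]

lemma bflip_ne {d : ℕ} (x : Fin d → Bool) (i : Fin d) : bflip x i ≠ x := by
  intro h
  have := congrFun h i
  simp [bflip] at this

lemma bflip_inj {d : ℕ} (x : Fin d → Bool) {i i' : Fin d} (h : bflip x i = bflip x i') :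
    i = i' := by
  by_contra hne
  have h1 := congrFun h i
  simp only [bflip, if_pos rfl, if_neg hne] at h1
  exact Bool.not_ne_self (x i) h1

lemma hypercube_adj_bflip {d : ℕ} (x : Fin d → Bool) (i : Fin d) :
    (hypercube d).Adj x (bflip x i) := by
  rw [hypercube, SimpleGraph.fromRel_adj]
  refine ⟨(bflip_ne x i).symm, Or.inl ?_⟩
  have h : (Finset.univ.filter (fun j => x j ≠ bflip x i j)) = {i} := by
    ext j
    simp only [Finset.mem_filter, Finset.mem_univ, true_and, Finset.mem_singleton]
    by_cases h : j = i
    · simp [bflip, h]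
    · simp [bflip, h]
  rw [h, Finset.card_singleton]

/-- Two chords whose endpoint labels have the same sum are "parallel": the endpoints
of the second chord lie on the same side of the first chord. -/
lemma parallel_same_side {n : ℕ} [NeZero n] {a b c d : ZMod n}
    (hsum : a + b = c + d) (hca : c ≠ a) (hda : d ≠ a) :
    (inArc n a b c ↔ inArc n a b d) := by
  have hw : (c - a) + (d - a) = b - a := by linear_combination -hsum
  have hU : (c - a).val ≠ 0 := by
    simpa [ZMod.val_eq_zero] using sub_ne_zero.mpr hca
  have hV : (d - a).val ≠ 0 := by
    simpa [ZMod.val_eq_zero] using sub_ne_zero.mpr hda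
  have hWval : (b - a).val = ((c - a).val + (d - a).val) % n := by
    rw [← hw, ZMod.val_add]
  have hUlt : (c - a).val < n := ZMod.val_lt _
  have hVlt : (d - a).val < n := ZMod.val_lt _
  simp only [inArc]
  rcases lt_or_ge ((c - a).val + (d - a).val) n with h | h
  · rw [Nat.mod_eq_of_lt h] at hWval
    omega
  · have h2 : ((c - a).val + (d - a).val) % n = (c - a).val + (d - a).val - n := by
      rw [Nat.mod_eq_sub_mod h, Nat.mod_eq_of_lt (by omega)]
    rw [h2] at hWval
    omega

/-- Every convex-geometric drawing of `Q_d` (`d ≥ 2`), given by a bijective placement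
`pos` of the vertices onto `2^d` points in convex position in cyclic order, contains a
plane matching with at least `⌊(d-1)/2⌋` edges: a set of pairwise vertex-disjoint
hypercube edges whose chords are pairwise noncrossing. -/
theorem stmt16 (d : ℕ) (hd : 2 ≤ d) (pos : (Fin d → Bool) ≃ ZMod (2 ^ d)) :
    ∃ M : Finset ((Fin d → Bool) × (Fin d → Bool)),
      (∀ e ∈ M, (hypercube d).Adj e.1 e.2) ∧
      (∀ e ∈ M, ∀ f ∈ M, e ≠ f →
        e.1 ≠ f.1 ∧ e.1 ≠ f.2 ∧ e.2 ≠ f.1 ∧ e.2 ≠ f.2) ∧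
      (∀ e ∈ M, ∀ f ∈ M, e ≠ f →
        ¬ Crossing (2 ^ d) (pos e.1, pos e.2) (pos f.1, pos f.2)) ∧
      (d - 1) / 2 ≤ M.card := by
  classical
  haveI : NeZero (2 ^ d) := ⟨pow_ne_zero d two_ne_zero⟩
  set key : ((Fin d → Bool) × Fin d) → ZMod (2 ^ d) :=
    fun p => pos p.1 + pos (bflip p.1 p.2) with hkey
  have hmaps : ∀ p ∈ (Finset.univ : Finset ((Fin d → Bool) × Fin d)),
      key p ∈ (Finset.univ : Finset (ZMod (2 ^ d))) := fun _ _ => Finset.mem_univ _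
  have hcard1 : (Finset.univ : Finset ((Fin d → Bool) × Fin d)).card = 2 ^ d * d := by
    rw [Finset.card_univ, Fintype.card_prod, Fintype.card_fun, Fintype.card_bool,
      Fintype.card_fin]
  have hcard2 : (Finset.univ : Finset (ZMod (2 ^ d))).card = 2 ^ d := by
    rw [Finset.card_univ, ZMod.card]
  have hlt : (Finset.univ : Finset (ZMod (2 ^ d))).card * (d - 1)
      < (Finset.univ : Finset ((Fin d → Bool) × Fin d)).card := by
    rw [hcard1, hcard2]
    have h0 : 0 < 2 ^ d := Nat.pow_pos (by norm_num)
    have hdd : d - 1 < d := by omega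
    exact mul_lt_mul_of_pos_left hdd h0
  obtain ⟨s₀, -, hs₀⟩ := Finset.exists_lt_card_fiber_of_mul_lt_card_of_maps_to hmaps hlt
  set B : Finset ((Fin d → Bool) × Fin d) :=
    Finset.univ.filter (fun p => key p = s₀) with hB
  have hBcard : d ≤ B.card := by
    have h := hs₀
    omega
  set canon : ((Fin d → Bool) × Fin d) → Prop :=
    fun p => (pos p.1).val < (pos (bflip p.1 p.2)).val with hcanon
  have hvalne : ∀ p : (Fin d → Bool) × Fin d,
      (pos p.1).val ≠ (pos (bflip p.1 p.2)).val := by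
    intro p h
    have h2 : pos p.1 = pos (bflip p.1 p.2) := ZMod.val_injective _ h
    exact bflip_ne p.1 p.2 (pos.injective h2).symm
  have hinv_mem : ∀ p ∈ B, ((bflip p.1 p.2, p.2) : (Fin d → Bool) × Fin d) ∈ B := by
    intro p hp
    simp only [hB, Finset.mem_filter, Finset.mem_univ, true_and, hkey] at hp ⊢
    simp only [bflip_bflip]
    rw [add_comm]
    exact hp
  have hcard_half : (B.filter canon).card + (B.filter canon).card = B.card := by
    have hbij : (B.filter canon).card = (B.filter (fun p => ¬ canon p)).card := by
      refine Finset.card_bij' (fun p _ => (bflip p.1 p.2, p.2))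
        (fun p _ => (bflip p.1 p.2, p.2)) ?_ ?_ ?_ ?_
      · intro p hp
        rw [Finset.mem_filter] at hp ⊢
        obtain ⟨hp1, hp2⟩ := hp
        refine ⟨hinv_mem p hp1, ?_⟩
        simp only [hcanon, bflip_bflip] at hp2 ⊢
        omega
      · intro p hp
        rw [Finset.mem_filter] at hp ⊢
        obtain ⟨hp1, hp2⟩ := hp
        refine ⟨hinv_mem p hp1, ?_⟩
        have hne := hvalne p
        simp only [hcanon, bflip_bflip] at hp2 ⊢
        omega
      · intro p _
        simp [bflip_bflip]
      · intro p _
        simp [bflip_bflip]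
    have htot := Finset.card_filter_add_card_filter_not (s := B) (p := canon)
    omega
  set M : Finset ((Fin d → Bool) × (Fin d → Bool)) :=
    (B.filter canon).image (fun p => (p.1, bflip p.1 p.2)) with hM
  have hrep : ∀ e ∈ M, (hypercube d).Adj e.1 e.2 ∧
      pos e.1 + pos e.2 = s₀ ∧ (pos e.1).val < (pos e.2).val := by
    intro e he
    simp only [hM, Finset.mem_image] at he
    obtain ⟨p, hp, he⟩ := he
    rw [Finset.mem_filter] at hp
    obtain ⟨hp1, hp2⟩ := hp
    simp only [hB, Finset.mem_filter, Finset.mem_univ, true_and, hkey] at hp1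
    simp only [hcanon] at hp2
    have h1 : e.1 = p.1 := by rw [← he]
    have h2 : e.2 = bflip p.1 p.2 := by rw [← he]
    rw [h1, h2]
    exact ⟨hypercube_adj_bflip p.1 p.2, hp1, hp2⟩
  refine ⟨M, ?_, ?_, ?_, ?_⟩
  · intro e he
    exact (hrep e he).1
  · intro e he f hf hef
    obtain ⟨-, hesum, hecanon⟩ := hrep e he
    obtain ⟨-, hfsum, hfcanon⟩ := hrep f hf
    refine ⟨?_, ?_, ?_, ?_⟩ <;> intro h
    · rw [h] at hesum
      have h2 : pos e.2 = pos f.2 := add_left_cancel (hesum.trans hfsum.symm)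
      exact hef (Prod.ext h (pos.injective h2))
    · rw [h] at hesum hecanon
      have h3 := hesum.trans hfsum.symm
      rw [add_comm (pos f.1) (pos f.2)] at h3
      have h4 : pos e.2 = pos f.1 := add_left_cancel h3
      rw [h4] at hecanon
      omega
    · rw [h] at hesum hecanon
      rw [add_comm (pos e.1) (pos f.1)] at hesum
      have h4 : pos e.1 = pos f.2 := add_left_cancel (hesum.trans hfsum.symm)
      rw [h4] at hecanon
      omega
    · rw [h] at hesum
      have h2 : pos e.1 = pos f.1 := add_right_cancel (hesum.trans hfsum.symm)
      exact hef (Prod.ext (pos.injective h2) h)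
  · intro e he f hf hef hCross
    obtain ⟨-, hesum, -⟩ := hrep e he
    obtain ⟨-, hfsum, -⟩ := hrep f hf
    have hsum : pos e.1 + pos e.2 = pos f.1 + pos f.2 := hesum.trans hfsum.symm
    simp only [Crossing] at hCross
    obtain ⟨hab, hcd, h13, h14, h23, h24, hiff⟩ := hCross
    have hpar := parallel_same_side (n := 2 ^ d) hsum (Ne.symm h13) (Ne.symm h14)
    tauto
  · have himg : M.card = (B.filter canon).card := by
      rw [hM]
      apply Finset.card_image_of_injOn
      intro p _ q _ h
      have h' : (p.1, bflip p.1 p.2) = (q.1, bflip q.1 q.2) := h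
      rw [Prod.mk.injEq] at h'
      obtain ⟨h1, h2⟩ := h'
      rw [← h1] at h2
      exact Prod.ext h1 (bflip_inj p.1 h2)
    rw [himg]
    omega
end
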